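/- arXiv:2105.01729 — 7 statements merged into one kernel-verified Lean document; each statement's English description precedes it below -/
import Mathlib

section
/- Let B = ⊕_{i∈ℤ} B_i be a ℤ-graded integral domain with saturation index e(B) = 1. For each d ∈ ℕ with d ≥ 2, the set 𝒳_d is nonempty and the following are equivalent: (a) HT(𝒳_d) > 1; (b) gcd(e(B/𝔭), d) = 1 for every homogeneous prime ideal 𝔭 of B of height 1; (c) d ∈ Π*(B). -/
/-- A derivation `D : R → R` is *locally nilpotent* if for every `b` some iterate kills `b`. -/
def Derivation.IsLocallyNilpotentD {R : Type*} [CommRing R] (D : Derivation ℤ R R) : Prop :=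
  ∀ b : R, ∃ n : ℕ, 0 < n ∧ (⇑D)^[n] b = 0

/-- A commutative ring is *rigid* if its only locally nilpotent derivation is `0`. -/
def IsRigidRing (R : Type*) [CommRing R] : Prop :=
  ∀ D : Derivation ℤ R R, Derivation.IsLocallyNilpotentD D → D = 0

/-- `C` is a polynomial ring in one variable over the subring `R`. -/
def IsPolynomialRingOver {C : Type*} [CommRing C] (R : Subring C) : Prop :=
  ∃ e : C ≃+* Polynomial R, ∀ r : R, e (r : C) = Polynomial.C r

/-- `C` is a polynomial ring in one variable over some subring. -/
def IsPolynomialRingInOneVariable (C : Type*) [CommRing C] : Prop :=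
  ∃ R : Subring C, IsPolynomialRingOver R

/-- gcd of a set of integers: the nonnegative generator of the ideal it spans. -/
noncomputable def Set.gcdInt (S : Set ℤ) : ℕ :=
  (Submodule.IsPrincipal.generator (Ideal.span S)).natAbs

section Graded

variable {B : Type*} [CommRing B] (𝒜 : ℤ → Submodule ℤ B)

/-- The `d`-th Veronese subring `B^{(d)} = ⊕_{i ∈ ℤ} B_{d i}` of a `ℤ`-graded ring. -/
def VeroneseSubring (d : ℤ) : Subring B :=
  Subring.closure (⋃ i : ℤ, ((𝒜 (d * i) : Set B)))

/-- The saturation index `e(B) = gcd { i : B_i ≠ 0 }`. -/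
noncomputable def satIndex : ℕ :=
  Set.gcdInt {i : ℤ | 𝒜 i ≠ ⊥}

/-- The saturation index `e(B/𝔭)` of the quotient of `B` by a homogeneous prime `𝔭`;
it equals `gcd { i : B_i ⊄ 𝔭 }`. -/
noncomputable def quotSatIndex (p : Ideal B) : ℕ :=
  Set.gcdInt {i : ℤ | ¬ (𝒜 i : Set B) ⊆ (p : Set B)}

/-- `p` is a prime ideal of height `1` (in a domain). -/
def IsHeightOnePrime {R : Type*} [CommRing R] (p : Ideal R) : Prop :=
  p.IsPrime ∧ p ≠ ⊥ ∧ ∀ q : Ideal R, q.IsPrime → q < p → q = ⊥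

/-- `HT(S) > 1`: no height-one prime ideal contains `S`. -/
def HTgtOne {R : Type*} [CommRing R] (S : Set R) : Prop :=
  ∀ p : Ideal R, IsHeightOnePrime p → ¬ S ⊆ (p : Set R)

variable [GradedAlgebra 𝒜]

/-- `B` is saturated in codimension 1 when `e(B/𝔭) = e(B)` for all homogeneous height-1 primes. -/
def SaturatedInCodimOne : Prop :=
  ∀ p : Ideal B, Ideal.IsHomogeneous 𝒜 p → IsHeightOnePrime p →
    quotSatIndex 𝒜 p = satIndex 𝒜

/-- The set `Π(B)` of prime numbers dividing `e(B/𝔭)` for some homogeneous height-1 prime `𝔭`. -/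
def PiSet : Set ℕ :=
  {q : ℕ | q.Prime ∧ ∃ p : Ideal B, Ideal.IsHomogeneous 𝒜 p ∧ IsHeightOnePrime p ∧
    q ∣ quotSatIndex 𝒜 p}

/-- The set `Π*(B)` of positive natural numbers divisible by no element of `Π(B)`. -/
def PiStar : Set ℕ :=
  {d : ℕ | 1 ≤ d ∧ ∀ q ∈ PiSet 𝒜, ¬ q ∣ d}

/-- The set `𝒳_d` of nonzero homogeneous `x` with `gcd(deg x, d) = 1`. -/
def XSet (d : ℕ) : Set B :=
  {x : B | x ≠ 0 ∧ ∃ i : ℤ, x ∈ 𝒜 i ∧ Int.gcd i (d : ℤ) = 1}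

/-- `f` is a cylindrical element: nonzero, homogeneous of nonzero degree and `B_(f)` is a
polynomial ring in one variable. -/
def IsCylindrical (f : B) : Prop :=
  f ≠ 0 ∧ ∃ i : ℤ, i ≠ 0 ∧ f ∈ 𝒜 i ∧
    IsPolynomialRingInOneVariable (HomogeneousLocalization.Away 𝒜 f)

/-- The degree-zero part `B_0` as a subring of `B`. -/
def degZeroSubring : Subring B where
  carrier := (𝒜 0 : Set B)
  zero_mem' := zero_mem _
  one_mem' := SetLike.one_mem_graded 𝒜
  add_mem' := fun ha hb => add_mem ha hb
  neg_mem' := fun ha => neg_mem ha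
  mul_mem' := fun ha hb => by simpa using SetLike.mul_mem_graded ha hb

end Graded

/-- `(A, B) ∈ EXT` relative to the structure map `ι : A →+* B`: every derivation of `A`
extends uniquely to a derivation of `B`. -/
def MemEXT {A B : Type*} [CommRing A] [CommRing B] (ι : A →+* B) : Prop :=
  ∀ δ : Derivation ℤ A A, ∃! D : Derivation ℤ B B, ∀ a : A, D (ι a) = ι (δ a)

/-! The degrees `i` with `B_i ⊄ 𝔭` form an additive submonoid of `ℤ` whose gcd is `e(B/𝔭)`.
Modulo `d` such a submonoid is closed under negation (`-s ≡ (d - 1) • s`), so it contains an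
element congruent to its gcd; hence `𝒳_d ⊄ 𝔭` iff `gcd(e(B/𝔭), d) = 1`. For `𝔭 = 0` this gives
`𝒳_d ≠ ∅`, and a height-one prime containing `𝒳_d` then has a nonzero homogeneous core, so it is
itself homogeneous. -/

theorem Set.span_gcdInt (S : Set ℤ) : Ideal.span {(S.gcdInt : ℤ)} = Ideal.span S :=
  (Ideal.span_singleton_eq_span_singleton.mpr (Int.associated_natAbs _).symm).trans
    (Ideal.span_singleton_generator _)

theorem Set.gcdInt_mem_span (S : Set ℤ) : (S.gcdInt : ℤ) ∈ Ideal.span S :=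
  S.span_gcdInt ▸ Ideal.mem_span_singleton_self _

theorem Set.dvd_gcdInt_iff {S : Set ℤ} {n : ℤ} : n ∣ (S.gcdInt : ℤ) ↔ ∀ x ∈ S, n ∣ x := by
  rw [← Ideal.span_singleton_le_span_singleton, Set.span_gcdInt, Ideal.span_le]
  simp only [Set.subset_def, SetLike.mem_coe, Ideal.mem_span_singleton]

theorem Set.gcdInt_dvd {S : Set ℤ} {x : ℤ} (hx : x ∈ S) : (S.gcdInt : ℤ) ∣ x :=
  Set.dvd_gcdInt_iff.mp dvd_rfl x hx

namespace AddSubmonoid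

theorem exists_modEq_of_mem_closure (S : AddSubmonoid ℤ) {d : ℕ} (hd : 0 < d) {x : ℤ}
    (hx : x ∈ AddSubgroup.closure (S : Set ℤ)) : ∃ s ∈ S, s ≡ x [ZMOD d] := by
  induction hx using AddSubgroup.closure_induction with
  | mem x hx => exact ⟨x, hx, rfl⟩
  | zero => exact ⟨0, S.zero_mem, rfl⟩
  | add x y _ _ hx hy =>
    obtain ⟨s, hs, hsx⟩ := hx
    obtain ⟨t, ht, hty⟩ := hy
    exact ⟨s + t, S.add_mem hs ht, hsx.add hty⟩
  | neg x _ hx =>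
    obtain ⟨s, hs, hsx⟩ := hx
    refine ⟨(d - 1) • s, S.nsmul_mem hs _, ?_⟩
    calc (d - 1) • s = -s + d * s := by rw [nsmul_eq_mul, Nat.cast_sub hd]; ring
      _ ≡ -s + 0 [ZMOD d] :=
        (Int.ModEq.refl _).add (Int.modEq_zero_iff_dvd.mpr (dvd_mul_right _ _))
      _ ≡ -x [ZMOD d] := by simpa using hsx.neg

theorem exists_mem_gcd_eq_one (S : AddSubmonoid ℤ) {d : ℕ} (hd : 0 < d)
    (h : Int.gcd (S : Set ℤ).gcdInt d = 1) : ∃ s ∈ S, Int.gcd s d = 1 := by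
  have hmem : ((S : Set ℤ).gcdInt : ℤ) ∈ AddSubgroup.closure (S : Set ℤ) := by
    rw [← Submodule.span_int_eq_addSubgroupClosure]
    exact Set.gcdInt_mem_span _
  obtain ⟨s, hs, hsg⟩ := S.exists_modEq_of_mem_closure hd hmem
  exact ⟨s, hs, by rw [← Int.gcd_emod, hsg, Int.gcd_emod, h]⟩

end AddSubmonoid

section Graded

variable {B : Type*} [CommRing B] (𝒜 : ℤ → Submodule ℤ B)

theorem quotSatIndex_bot : quotSatIndex 𝒜 ⊥ = satIndex 𝒜 := by
  simp only [quotSatIndex, satIndex, ne_eq, Submodule.eq_bot_iff, Submodule.bot_coe,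
    Set.subset_singleton_iff, SetLike.mem_coe]

variable [SetLike.GradedMonoid 𝒜]

def Ideal.IsPrime.quotDegrees {p : Ideal B} (hp : p.IsPrime) : AddSubmonoid ℤ where
  carrier := {i | ¬ (𝒜 i : Set B) ⊆ p}
  zero_mem' h := hp.ne_top ((Ideal.eq_top_iff_one p).mpr (h (SetLike.one_mem_graded 𝒜)))
  add_mem' {i j} hi hj h := by
    obtain ⟨x, hxi, hxp⟩ := Set.not_subset.mp hi
    obtain ⟨y, hyj, hyp⟩ := Set.not_subset.mp hj
    exact (hp.mem_or_mem (h (SetLike.mul_mem_graded hxi hyj))).elim hxp hyp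

theorem not_XSet_subset_iff {p : Ideal B} (hp : p.IsPrime) {d : ℕ} (hd : 0 < d) :
    ¬ XSet 𝒜 d ⊆ p ↔ Nat.gcd (quotSatIndex 𝒜 p) d = 1 := by
  rw [← Int.gcd_natCast_natCast]
  constructor
  · intro h
    obtain ⟨x, ⟨-, i, hxi, hid⟩, hxp⟩ := Set.not_subset.mp h
    have hi : i ∈ hp.quotDegrees 𝒜 := fun hsub => hxp (hsub hxi)
    exact Nat.dvd_one.mp (hid ▸ Int.gcd_dvd_gcd_of_dvd_left _ (Set.gcdInt_dvd hi))
  · intro h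
    obtain ⟨i, hi, hid⟩ := (hp.quotDegrees 𝒜).exists_mem_gcd_eq_one hd h
    obtain ⟨x, hxi, hxp⟩ := Set.not_subset.mp hi
    exact Set.not_subset.mpr ⟨x, ⟨fun hx0 => hxp (hx0 ▸ p.zero_mem), i, hxi, hid⟩, hxp⟩

end Graded

theorem IsHeightOnePrime.isHomogeneous_of_homogeneousCore_ne_bot {ι σ A : Type*} [CommRing A]
    [AddCommMonoid ι] [LinearOrder ι] [IsOrderedCancelAddMonoid ι] [SetLike σ A]
    [AddSubmonoidClass σ A] {𝒜 : ι → σ} [GradedRing 𝒜] {p : Ideal A} (hp : IsHeightOnePrime p)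
    (h : (p.homogeneousCore 𝒜).toIdeal ≠ ⊥) : p.IsHomogeneous 𝒜 := by
  have hcore : (p.homogeneousCore 𝒜).toIdeal = p :=
    (Ideal.toIdeal_homogeneousCore_le 𝒜 p).eq_of_not_lt fun hlt =>
      h (hp.2.2 _ hp.1.homogeneousCore hlt)
  exact hcore ▸ (p.homogeneousCore 𝒜).isHomogeneous

theorem mem_PiStar_iff {B : Type*} [CommRing B] (𝒜 : ℤ → Submodule ℤ B) [GradedAlgebra 𝒜]
    {d : ℕ} (hd : 1 ≤ d) :
    d ∈ PiStar 𝒜 ↔ ∀ p : Ideal B, p.IsHomogeneous 𝒜 → IsHeightOnePrime p →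
      Nat.Coprime (quotSatIndex 𝒜 p) d := by
  constructor
  · rintro ⟨-, h⟩ p hhom hp
    by_contra hnot
    obtain ⟨q, hq, hqe, hqd⟩ := Nat.Prime.not_coprime_iff_dvd.mp hnot
    exact h q ⟨hq, p, hhom, hp, hqe⟩ hqd
  · intro h
    refine ⟨hd, ?_⟩
    rintro q ⟨hq, p, hhom, hp, hqe⟩ hqd
    exact Nat.Prime.not_coprime_iff_dvd.mpr ⟨q, hq, hqe, hqd⟩ (h p hhom hp)

/-- Let `B` be a `ℤ`-graded domain with `e(B) = 1` and `d ≥ 2`. Then `𝒳_d`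
is nonempty, and: `HT(𝒳_d) > 1` ⟺ `gcd(e(B/𝔭), d) = 1` for every homogeneous height-1
prime `𝔭` ⟺ `d ∈ Π*(B)`. -/
theorem statement7 {B : Type*} [CommRing B] [IsDomain B]
    (𝒜 : ℤ → Submodule ℤ B) [GradedAlgebra 𝒜]
    (hsat : satIndex 𝒜 = 1)
    (d : ℕ) (hd : 2 ≤ d) :
    (XSet 𝒜 d).Nonempty ∧
    (HTgtOne (XSet 𝒜 d) ↔
      ∀ p : Ideal B, Ideal.IsHomogeneous 𝒜 p → IsHeightOnePrime p →
        Nat.gcd (quotSatIndex 𝒜 p) d = 1) ∧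
    ((∀ p : Ideal B, Ideal.IsHomogeneous 𝒜 p → IsHeightOnePrime p →
        Nat.gcd (quotSatIndex 𝒜 p) d = 1) ↔ d ∈ PiStar 𝒜) := by
  have hd0 : 0 < d := by omega
  have hbot : ¬ XSet 𝒜 d ⊆ ((⊥ : Ideal B) : Set B) := by
    rw [not_XSet_subset_iff 𝒜 Ideal.isPrime_bot hd0, quotSatIndex_bot, hsat, Nat.gcd_one_left]
  refine ⟨(Set.nonempty_of_not_subset hbot).mono Set.sdiff_subset, ⟨?_, ?_⟩,
    (mem_PiStar_iff 𝒜 hd0).symm⟩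
  · intro h p _ hp
    exact (not_XSet_subset_iff 𝒜 hp.1 hd0).mp (h p hp)
  intro h p hp hsub
  have hcore : XSet 𝒜 d ⊆ (p.homogeneousCore 𝒜).toIdeal := fun x hx =>
    have ⟨_, i, hxi, _⟩ := hx
    Ideal.mem_homogeneousCore_of_homogeneous_of_mem ⟨i, hxi⟩ (hsub hx)
  have hhom := hp.isHomogeneous_of_homogeneousCore_ne_bot fun h0 => hbot (h0 ▸ hcore)
  exact (not_XSet_subset_iff 𝒜 hp.1 hd0).mpr (h p hhom hp) hsub
end

section
/- Let B = ⊕_{i∈ℤ} B_i be a ℤ-graded integral domain with saturation index e(B) = 1. Then: (a) if S is a subset of ℤ∖{0} satisfying HT(⋃_{i∈S} B_i) > 1, then each element of Π(B) is a prime factor of some element of S; (b) if HT(⋃_{i∈ℤ∖{0}} B_i) > 1 and B is noetherian, then Π(B) is a finite set; (c) if the condition HT(⋃_{i∈ℤ∖{0}} B_i) > 1 is false, then Π(B) is the set of all prime numbers and Π*(B) = {1}. -/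
/-!
If a height-one prime `𝔭` does not contain some `x ∈ B_i`, then `B_i ⊄ 𝔭`, so `e(B/𝔭)` divides
`i`; this gives (a). For (b), noetherianity lets us replace `⋃_{i ≠ 0} B_i` by the union of
finitely many `B_i` without changing the ideal it generates, and (a) bounds `Π(B)` by the prime
factors of these finitely many degrees. For (c), a height-one prime containing every `B_i` with
`i ≠ 0` is automatically homogeneous, and `e(B/𝔭) = gcd {0} = 0` is divisible by every prime.
-/

namespace Set

lemma gcdInt_dvd_of_mem {S : Set ℤ} {m : ℤ} (hm : m ∈ S) : (S.gcdInt : ℤ) ∣ m := by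
  rw [gcdInt, Int.natAbs_dvd]
  exact (Submodule.IsPrincipal.mem_iff_generator_dvd _).mp (Ideal.subset_span hm)

lemma gcdInt_eq_zero_of_subset_zero {S : Set ℤ} (h : S ⊆ {0}) : S.gcdInt = 0 := by
  rw [gcdInt, Int.natAbs_eq_zero, ← Submodule.IsPrincipal.eq_bot_iff_generator_eq_zero,
    Ideal.span_eq_bot]
  exact h

end Set

section HeightOne

variable {R : Type*} [CommRing R]

lemma HTgtOne.of_subset_span {S T : Set R} (hS : HTgtOne S) (hST : S ⊆ Ideal.span T) :
    HTgtOne T := fun p hp hTp =>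
  hS p hp (hST.trans (Ideal.span_le.mpr hTp))

/-- The ideal spanned by the union is finitely generated, hence a compact element of the lattice
of ideals. -/
lemma HTgtOne.exists_finite_subset [IsNoetherianRing R] {ι : Type*} {f : ι → Set R} {S : Set ι}
    (hS : HTgtOne (⋃ i ∈ S, f i)) : ∃ s ⊆ S, s.Finite ∧ HTgtOne (⋃ i ∈ s, f i) := by
  have hcompact : IsCompactElement (Ideal.span (⋃ i ∈ S, f i)) :=
    (Submodule.fg_iff_compact _).mp (IsNoetherian.noetherian _)
  have hle : Ideal.span (⋃ i ∈ S, f i) ≤ ⨆ i : S, Ideal.span (f i) := by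
    refine Ideal.span_le.mpr fun x hx => ?_
    obtain ⟨i, hi, hxi⟩ := Set.mem_iUnion₂.mp hx
    exact Ideal.mem_iSup_of_mem ⟨i, hi⟩ (Ideal.subset_span hxi)
  obtain ⟨t, ht⟩ := CompleteLattice.IsCompactElement.exists_finset_of_le_iSup _ hcompact _ hle
  refine ⟨Subtype.val '' (t : Set S), by simp, t.finite_toSet.image _, hS.of_subset_span ?_⟩
  refine Ideal.subset_span.trans (ht.trans (iSup₂_le fun i hi => Ideal.span_mono ?_))
  exact Set.subset_biUnion_of_mem (u := f) (Set.mem_image_of_mem _ hi)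

end HeightOne

lemma Ideal.isHomogeneous_of_forall_ne_zero_subset {ι A σ : Type*} [DecidableEq ι] [AddMonoid ι]
    [CommRing A] [SetLike σ A] [AddSubgroupClass σ A] (𝒜 : ι → σ) [GradedRing 𝒜] {p : Ideal A}
    (h : ∀ i ≠ 0, (𝒜 i : Set A) ⊆ p) : p.IsHomogeneous 𝒜 := by
  classical
  intro i r hr
  rcases eq_or_ne i 0 with rfl | hi
  · by_cases h0 : 0 ∈ (DirectSum.decompose 𝒜 r).support
    · -- the degree-zero component is `r` minus the components of nonzero degree
      have hsplit := (Finset.add_sum_erase _ (fun j => (DirectSum.decompose 𝒜 r j : A)) h0).trans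
        (DirectSum.sum_support_decompose 𝒜 r)
      rw [← eq_sub_iff_add_eq] at hsplit
      rw [hsplit]
      refine p.sub_mem hr (p.sum_mem fun j hj => h j (Finset.ne_of_mem_erase hj) ?_)
      exact SetLike.coe_mem _
    · rw [DFinsupp.notMem_support_iff.mp h0]
      exact p.zero_mem
  · exact h i hi (SetLike.coe_mem _)

section Graded

variable {B : Type*} [CommRing B] (𝒜 : ℤ → Submodule ℤ B)

lemma quotSatIndex_dvd_of_mem_of_notMem {p : Ideal B} {i : ℤ} {x : B} (hx : x ∈ 𝒜 i)
    (hxp : x ∉ p) : (quotSatIndex 𝒜 p : ℤ) ∣ i :=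
  Set.gcdInt_dvd_of_mem fun hsub => hxp (hsub hx)

lemma quotSatIndex_eq_zero_of_forall_ne_zero_subset {p : Ideal B}
    (h : ∀ i ≠ 0, (𝒜 i : Set B) ⊆ p) : quotSatIndex 𝒜 p = 0 :=
  Set.gcdInt_eq_zero_of_subset_zero fun i hi => by_contra fun hi0 => hi (h i hi0)

variable [GradedAlgebra 𝒜]

lemma exists_mem_dvd_of_mem_piSet {S : Set ℤ} (hS : HTgtOne (⋃ i ∈ S, (𝒜 i : Set B)))
    {q : ℕ} (hq : q ∈ PiSet 𝒜) : ∃ m ∈ S, (q : ℤ) ∣ m := by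
  obtain ⟨-, p, -, hp, hqp⟩ := hq
  obtain ⟨x, hxS, hxp⟩ := Set.not_subset.mp (hS p hp)
  obtain ⟨i, hi, hxi⟩ := Set.mem_iUnion₂.mp hxS
  exact ⟨i, hi,
    (Int.natCast_dvd_natCast.mpr hqp).trans (quotSatIndex_dvd_of_mem_of_notMem 𝒜 hxi hxp)⟩

lemma piSet_finite [IsNoetherianRing B]
    (hHT : HTgtOne (⋃ i ∈ {i : ℤ | i ≠ 0}, (𝒜 i : Set B))) : (PiSet 𝒜).Finite := by
  obtain ⟨s, hs0, hs, hHTs⟩ := hHT.exists_finite_subset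
  refine (hs.biUnion fun m _ => (Nat.divisors m.natAbs).finite_toSet).subset fun q hq => ?_
  obtain ⟨m, hm, hqm⟩ := exists_mem_dvd_of_mem_piSet 𝒜 hHTs hq
  exact Set.mem_iUnion₂.mpr ⟨m, hm, Nat.mem_divisors.mpr
    ⟨Int.natCast_dvd.mp hqm, Int.natAbs_ne_zero.mpr (hs0 hm)⟩⟩

lemma piSet_eq_setOf_prime_of_not_htGtOne
    (hHT : ¬ HTgtOne (⋃ i ∈ {i : ℤ | i ≠ 0}, (𝒜 i : Set B))) : PiSet 𝒜 = {q : ℕ | q.Prime} := by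
  simp only [HTgtOne, not_forall, not_not] at hHT
  obtain ⟨p, hp, hsub⟩ := hHT
  have hp₀ : ∀ i ≠ 0, (𝒜 i : Set B) ⊆ p := fun i hi x hx =>
    hsub (Set.mem_iUnion₂.mpr ⟨i, hi, hx⟩)
  refine Set.ext fun q => ⟨fun hq => hq.1, fun hq => ⟨hq, p, ?_, hp, ?_⟩⟩
  · exact Ideal.isHomogeneous_of_forall_ne_zero_subset 𝒜 hp₀
  · rw [quotSatIndex_eq_zero_of_forall_ne_zero_subset 𝒜 hp₀]
    exact dvd_zero q

lemma piStar_eq_singleton_one_of_piSet_eq (h : PiSet 𝒜 = {q : ℕ | q.Prime}) :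
    PiStar 𝒜 = {1} := by
  ext d
  simp only [PiStar, h, Set.mem_ofPred_eq, Set.mem_singleton_iff]
  refine ⟨fun ⟨_, hd⟩ => ?_, ?_⟩
  · by_contra hne
    obtain ⟨q, hq, hqd⟩ := Nat.exists_prime_and_dvd hne
    exact hd q hq hqd
  · rintro rfl
    exact ⟨le_rfl, fun q hq hq1 => hq.ne_one (Nat.dvd_one.mp hq1)⟩

end Graded

theorem statement8_general {B : Type*} [CommRing B]
    (𝒜 : ℤ → Submodule ℤ B) [GradedAlgebra 𝒜] :
    (∀ S : Set ℤ, 0 ∉ S → HTgtOne (⋃ i ∈ S, (𝒜 i : Set B)) →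
      ∀ q ∈ PiSet 𝒜, ∃ m ∈ S, (q : ℤ) ∣ m) ∧
    (HTgtOne (⋃ i ∈ {i : ℤ | i ≠ 0}, (𝒜 i : Set B)) → IsNoetherianRing B →
      (PiSet 𝒜).Finite) ∧
    (¬ HTgtOne (⋃ i ∈ {i : ℤ | i ≠ 0}, (𝒜 i : Set B)) →
      PiSet 𝒜 = {q : ℕ | q.Prime} ∧ PiStar 𝒜 = {1}) := by
  refine ⟨fun S _ hS q hq => exists_mem_dvd_of_mem_piSet 𝒜 hS hq,
    fun hHT _ => piSet_finite 𝒜 hHT, fun hHT => ?_⟩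
  have hPi := piSet_eq_setOf_prime_of_not_htGtOne 𝒜 hHT
  exact ⟨hPi, piStar_eq_singleton_one_of_piSet_eq 𝒜 hPi⟩

/-- Let `B` be a `ℤ`-graded domain with `e(B) = 1`. (a) If `S ⊆ ℤ∖{0}` and
`HT(⋃_{i∈S} B_i) > 1`, then every element of `Π(B)` divides some element of `S`. (b) If
`HT(⋃_{i≠0} B_i) > 1` and `B` is noetherian then `Π(B)` is finite. (c) If
`HT(⋃_{i≠0} B_i) > 1` fails then `Π(B)` is the set of all primes and `Π*(B) = {1}`. -/
theorem statement8 {B : Type*} [CommRing B] [IsDomain B]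
    (𝒜 : ℤ → Submodule ℤ B) [GradedAlgebra 𝒜]
    (hsat : satIndex 𝒜 = 1) :
    (∀ S : Set ℤ, 0 ∉ S → HTgtOne (⋃ i ∈ S, (𝒜 i : Set B)) →
      ∀ q ∈ PiSet 𝒜, ∃ m ∈ S, (q : ℤ) ∣ m) ∧
    (HTgtOne (⋃ i ∈ {i : ℤ | i ≠ 0}, (𝒜 i : Set B)) → IsNoetherianRing B →
      (PiSet 𝒜).Finite) ∧
    (¬ HTgtOne (⋃ i ∈ {i : ℤ | i ≠ 0}, (𝒜 i : Set B)) →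
      PiSet 𝒜 = {q : ℕ | q.Prime} ∧ PiStar 𝒜 = {1}) :=
  statement8_general 𝒜
end

section
/- Let B be a noetherian normal integral domain and A a subring of B. Suppose that (Frac A, Frac B) ∈ EXT, and that there exists a family (f_i)_{i∈I} of nonzero elements of A such that: (i) (A_{f_i}, B_{f_i}) ∈ EXT for every i ∈ I, where A_{f_i} and B_{f_i} denote localizations at the powers of f_i; and (ii) no height-1 prime ideal of B contains all the f_i. Then (A, B) ∈ EXT. -/
/-!
A derivation `δ` of `A` extends to `Frac A` and then, by `(Frac A, Frac B) ∈ EXT`, to a unique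
derivation `D` of `L = Frac B`. Any derivation of `B` or of `B_{fᵢ}` extending `δ` extends further
to `L`, hence agrees with `D`; so `D` maps `B` into every `B_{fᵢ}`, i.e. the conductor
`{c | c • D b ∈ B}` contains a power of each `fᵢ`. In a noetherian normal domain an element of `L`
outside `B` has its conductor inside an associated prime of some `B ⧸ (b)`, and such a prime has
height one because its localization has principal maximal ideal. Condition (ii) excludes this, so
`D` preserves `B` and restricts to the required unique derivation of `B`.
-/

section DerivationLocalization

open TrivSqZeroExt

variable {R : Type*} [CommRing R] (S : Type*) [CommRing S] [Algebra R S]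

noncomputable def Derivation.toTrivSqZeroExt (δ : Derivation ℤ R R) :
    R →+* TrivSqZeroExt S S where
  toFun r := inl (algebraMap R S r) + inr (algebraMap R S (δ r))
  map_one' := by ext <;> simp
  map_mul' x y := by
    ext
    · simp
    · simp only [snd_mul, snd_add, snd_inl, snd_inr, fst_add, fst_inl, fst_inr, Derivation.leibniz,
        smul_eq_mul, MulOpposite.smul_eq_mul_unop, MulOpposite.unop_op, map_add, map_mul]
      ring
  map_zero' := by ext <;> simp
  map_add' x y := by ext <;> simp [Algebra.smul_def]

-- A derivation of `S` is a ring map `S → S[ε]` lifting the identity, and such a map extends along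
-- the localization since `r + δ(r) ε` is a unit as soon as `r` is.
theorem IsLocalization.exists_derivation_extend (M : Submonoid R) [IsLocalization M S]
    (δ : Derivation ℤ R R) :
    ∃ D : Derivation ℤ S S, ∀ r, D (algebraMap R S r) = algebraMap R S (δ r) := by
  have hunit (m : M) : IsUnit (δ.toTrivSqZeroExt S m) := by
    simpa [isUnit_iff_isUnit_fst, Derivation.toTrivSqZeroExt] using
      IsLocalization.map_units S m
  let H : S →+* TrivSqZeroExt S S := IsLocalization.lift hunit
  have hH (r : R) : H (algebraMap R S r) = δ.toTrivSqZeroExt S r := IsLocalization.lift_eq hunit r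
  have hfst (s : S) : (H s).fst = s := by
    have : (fstHom S S S).toRingHom.comp H = RingHom.id S :=
      IsLocalization.ringHom_ext M (RingHom.ext fun r => by simp [hH, Derivation.toTrivSqZeroExt])
    exact RingHom.congr_fun this s
  refine ⟨Derivation.mk' ((sndHom S S).toAddMonoidHom.comp H.toAddMonoidHom).toIntLinearMap
    fun a b => ?_, fun r => ?_⟩
  · simp only [AddMonoidHom.coe_toIntLinearMap, AddMonoidHom.coe_comp, Function.comp_apply]
    simp [snd_mul, hfst]
    ring
  · simp [hH, Derivation.toTrivSqZeroExt, Algebra.smul_def, algebraMap_eq_inl]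

end DerivationLocalization

theorem Derivation.apply_eq_of_isFractionRing {A K L : Type*} [CommRing A] [Field K] [Field L]
    [Algebra A K] [IsFractionRing A K] (φ : K →+* L) {D₁ D₂ : Derivation ℤ L L}
    (h : ∀ a : A, D₁ (φ (algebraMap A K a)) = D₂ (φ (algebraMap A K a))) (k : K) :
    D₁ (φ k) = D₂ (φ k) := by
  obtain ⟨a, s, -, rfl⟩ := IsFractionRing.div_surjective (A := A) k
  rw [map_div₀, Derivation.leibniz_div, Derivation.leibniz_div, h, h]

theorem Derivation.exists_restrict {B L : Type*} [CommRing B] [CommRing L] [Algebra B L]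
    (hinj : Function.Injective (algebraMap B L)) (D : Derivation ℤ L L)
    (hD : ∀ b, D (algebraMap B L b) ∈ (1 : Submodule B L)) :
    ∃ D' : Derivation ℤ B B, ∀ b, algebraMap B L (D' b) = D (algebraMap B L b) := by
  choose d hd using fun b => Submodule.mem_one.mp (hD b)
  let d' : B →+ B :=
    { toFun := d
      map_zero' := hinj (by simp [hd])
      map_add' := fun x y => hinj (by simp [hd]) }
  exact ⟨Derivation.mk' d'.toIntLinearMap fun x y => hinj (by simp [d', hd]), hd⟩

open IsLocalRing in
theorem isHeightOnePrime_of_isPrincipal_maximalIdeal {B : Type*} [CommRing B] [IsDomain B]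
    [IsNoetherianRing B] {p : Ideal B} [p.IsPrime] (hp : p ≠ ⊥)
    (hprinc : (maximalIdeal (Localization.AtPrime p)).IsPrincipal) : IsHeightOnePrime p := by
  have hdim := ((tfae_of_isNoetherianRing_of_isLocalRing_of_isDomain
    (Localization.AtPrime p)).out 4 3).mp hprinc
  refine ⟨‹_›, hp, fun q hq hqp => by_contra fun hq0 => hqp.ne ?_⟩
  have hdisj : Disjoint (p.primeCompl : Set B) q :=
    Set.disjoint_left.mpr fun _ hx hxq => hx (hqp.le hxq)
  have hunder := IsLocalization.under_map_of_isPrime_disjoint p.primeCompl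
    (Localization.AtPrime p) hq hdisj
  have hmap : q.map (algebraMap B (Localization.AtPrime p)) = maximalIdeal _ := by
    refine hdim.2 _ (fun h => hq0 ?_) (IsLocalization.isPrime_of_isPrime_disjoint _ _ q hq hdisj)
    rw [← hunder, h]
    exact Ideal.comap_bot_of_injective _
      (IsLocalization.injective (Localization.AtPrime p) p.primeCompl_le_nonZeroDivisors)
  rw [← hunder, hmap, Localization.AtPrime.under_maximalIdeal]

open IsLocalRing in
theorem IsLocalRing.maximalIdeal_isPrincipal_of_le_colon {W F : Type*} [CommRing W]
    [IsLocalRing W] [IsNoetherianRing W] [IsIntegrallyClosed W] [Field F] [Algebra W F]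
    [IsFractionRing W F] {y : F} (hy : y ∉ (1 : Submodule W F))
    (hle : maximalIdeal W ≤ (1 : Submodule W F).colon {y}) :
    (maximalIdeal W).IsPrincipal := by
  rcases eq_or_ne (maximalIdeal W) ⊥ with hm | hm
  · rw [hm]; infer_instance
  have hinj : Function.Injective (algebraMap W F) := IsFractionRing.injective W F
  have hmul (t : W) (ht : t ∈ maximalIdeal W) : ∃ w, algebraMap W F w = y * algebraMap W F t := by
    simpa [Submodule.mem_one, Algebra.smul_def, mul_comm] using hle ht
  by_cases hstable : ∀ t ∈ maximalIdeal W, ∃ t' ∈ maximalIdeal W,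
      algebraMap W F t' = y * algebraMap W F t
  · -- `y` stabilises the nonzero finitely generated `W`-module `m`, so it is integral over `W`
    exfalso
    refine hy (Submodule.mem_one.mpr (IsIntegrallyClosed.isIntegral_iff.mp ?_))
    refine isIntegral_of_smul_mem_submodule (Submodule.map (Algebra.linearMap W F) (maximalIdeal W))
      ?_ ((IsNoetherian.noetherian _).map _) y ?_
    · rw [← Submodule.map_bot (Algebra.linearMap W F)]
      exact (Submodule.map_injective_of_injective hinj).ne hm
    · rintro _ ⟨t, ht, rfl⟩
      exact hstable t ht
  · push Not at hstable
    obtain ⟨t₀, ht₀, hnot⟩ := hstable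
    obtain ⟨w₀, hw₀⟩ := hmul t₀ ht₀
    have hunit : IsUnit w₀ := by
      by_contra h
      exact hnot w₀ ((mem_maximalIdeal w₀).mpr h) hw₀
    refine ⟨t₀, le_antisymm (fun t ht => ?_) ?_⟩
    · obtain ⟨w, hw⟩ := hmul t ht
      have hcross : w * t₀ = w₀ * t := hinj (by simp only [map_mul, hw, hw₀]; ring)
      refine Ideal.mem_span_singleton'.mpr ⟨w * ↑hunit.unit⁻¹, ?_⟩
      rw [mul_right_comm, hcross, mul_right_comm, hunit.mul_val_inv, one_mul]
    · rw [Ideal.submodule_span_eq, Ideal.span_singleton_le_iff_mem]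
      exact ht₀

open IsLocalRing in
theorem IsAssociatedPrime.isHeightOnePrime {B : Type*} [CommRing B] [IsDomain B]
    [IsNoetherianRing B] [IsIntegrallyClosed B] {p : Ideal B} {b : B} (hb : b ≠ 0)
    (h : IsAssociatedPrime p (B ⧸ Ideal.span {b})) : IsHeightOnePrime p := by
  obtain ⟨hp, x, hpx⟩ := isAssociatedPrime_iff.mp h
  obtain ⟨c, rfl⟩ := Ideal.Quotient.mk_surjective x
  have hmem (r : B) : r ∈ p ↔ r * c ∈ Ideal.span {b} := by
    rw [hpx, Submodule.mem_colon_singleton, Submodule.mem_bot, Algebra.smul_def,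
      Ideal.Quotient.algebraMap_eq, ← map_mul, Ideal.Quotient.eq_zero_iff_mem]
  let W := Localization.AtPrime p
  let F := FractionRing B
  have : IsIntegrallyClosed W :=
    isIntegrallyClosed_of_isLocalization W p.primeCompl p.primeCompl_le_nonZeroDivisors
  have hbF : algebraMap B F b ≠ 0 := IsFractionRing.to_map_ne_zero_of_mem_nonZeroDivisors
    (mem_nonZeroDivisors_of_ne_zero hb)
  refine isHeightOnePrime_of_isPrincipal_maximalIdeal
    (fun hbot => hb (by simpa [hbot] using (hmem b).mpr (Ideal.mul_mem_right _ _
      (Ideal.mem_span_singleton_self b))))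
    (maximalIdeal_isPrincipal_of_le_colon (y := algebraMap B F c / algebraMap B F b) ?_ ?_)
  · rintro hy
    obtain ⟨w, hw⟩ := Submodule.mem_one.mp hy
    obtain ⟨⟨d, s⟩, rfl⟩ := IsLocalization.mk'_surjective p.primeCompl w
    have hsF : algebraMap B F s ≠ 0 := IsFractionRing.to_map_ne_zero_of_mem_nonZeroDivisors
      (p.primeCompl_le_nonZeroDivisors s.2)
    rw [← IsLocalization.mk'_eq_algebraMap_mk'_of_submonoid_le W F
        p.primeCompl_le_nonZeroDivisors,
      IsFractionRing.mk'_eq_div, div_eq_div_iff hsF hbF, ← map_mul, ← map_mul] at hw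
    exact s.2 ((hmem s).mpr (Ideal.mem_span_singleton'.mpr
      ⟨d, by rw [IsFractionRing.injective B F hw, mul_comm]⟩))
  · rw [← Localization.AtPrime.map_eq_maximalIdeal, Ideal.map_le_iff_le_comap]
    intro r hr
    obtain ⟨e, he⟩ := Ideal.mem_span_singleton'.mp ((hmem r).mp hr)
    rw [Ideal.mem_comap, Submodule.mem_colon_singleton, Submodule.mem_one]
    refine ⟨algebraMap B W e, ?_⟩
    rw [Algebra.smul_def, ← IsScalarTower.algebraMap_apply, ← IsScalarTower.algebraMap_apply]
    rw [mul_div_assoc', eq_div_iff hbF, ← map_mul, ← map_mul, he]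

theorem exists_isHeightOnePrime_colon_le {B L : Type*} [CommRing B] [IsDomain B]
    [IsNoetherianRing B] [IsIntegrallyClosed B] [Field L] [Algebra B L] [IsFractionRing B L]
    {z : L} (hz : z ∉ (1 : Submodule B L)) :
    ∃ p : Ideal B, IsHeightOnePrime p ∧ (1 : Submodule B L).colon {z} ≤ p := by
  obtain ⟨a, b, hb, rfl⟩ := IsFractionRing.div_surjective (A := B) z
  have hbL : algebraMap B L b ≠ 0 := IsFractionRing.to_map_ne_zero_of_mem_nonZeroDivisors hb
  have hcolon : (1 : Submodule B L).colon {algebraMap B L a / algebraMap B L b} =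
      (⊥ : Submodule B (B ⧸ Ideal.span {b})).colon {Ideal.Quotient.mk _ a} := by
    ext r
    rw [Submodule.mem_colon_singleton, Submodule.mem_colon_singleton, Submodule.mem_one,
      Submodule.mem_bot, Algebra.smul_def, Algebra.smul_def, Ideal.Quotient.algebraMap_eq,
      ← map_mul, Ideal.Quotient.eq_zero_iff_mem, Ideal.mem_span_singleton']
    refine exists_congr fun y => ?_
    rw [mul_div_assoc', eq_div_iff hbL, ← map_mul, ← map_mul,
      (IsFractionRing.injective B L).eq_iff]
  have ha : Ideal.Quotient.mk (Ideal.span {b}) a ≠ 0 := by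
    intro ha
    have h1 : (1 : B) ∈ (⊥ : Submodule B (B ⧸ Ideal.span {b})).colon {Ideal.Quotient.mk _ a} := by
      simp [ha]
    rw [← hcolon, Submodule.mem_colon_singleton, one_smul] at h1
    exact hz h1
  obtain ⟨p, hp, hle⟩ := exists_le_isAssociatedPrime_of_isNoetherianRing B _ ha
  exact ⟨p, hp.isHeightOnePrime (nonZeroDivisors.ne_zero hb), hcolon ▸ hle⟩

theorem MemEXT.comp_algebraMap {A K L : Type*} [CommRing A] [Field K] [Field L] [Algebra A K]
    [IsFractionRing A K] {φ : K →+* L} (h : MemEXT φ) : MemEXT (φ.comp (algebraMap A K)) := by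
  intro δ
  obtain ⟨δK, hδK⟩ := IsLocalization.exists_derivation_extend K (nonZeroDivisors A) δ
  obtain ⟨D, hD, huniq⟩ := h δK
  have hDA (a : A) : D (φ (algebraMap A K a)) = φ (algebraMap A K (δ a)) := by rw [hD, hδK]
  refine ⟨D, hDA, fun E hE => huniq E fun k => ?_⟩
  rw [Derivation.apply_eq_of_isFractionRing φ (fun a => (hE a).trans (hDA a).symm) k, hD]

section ExtensionThroughFractionField

variable {A B L : Type*} [CommRing A] [CommRing B] [Field L] [Algebra B L] [IsFractionRing B L]
  (ι : A →+* B) (δ : Derivation ℤ A A) {D : Derivation ℤ L L}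

theorem pow_mem_colon_of_memEXT_away [IsDomain B]
    (huniq : ∀ E : Derivation ℤ L L,
      (∀ a, E (algebraMap B L (ι a)) = algebraMap B L (ι (δ a))) → E = D)
    {g : A} (hg : ι g ≠ 0) (hext : MemEXT (Localization.awayMap ι g)) (b : B) :
    ∃ n : ℕ, ι g ^ n ∈ (1 : Submodule B L).colon {D (algebraMap B L b)} := by
  let Bg := Localization.Away (ι g)
  obtain ⟨δg, hδg⟩ :=
    IsLocalization.exists_derivation_extend (Localization.Away g) (Submonoid.powers g) δ
  obtain ⟨Dg, hDg, -⟩ := hext δg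
  have hle : Submonoid.powers (ι g) ≤ nonZeroDivisors B :=
    powers_le_nonZeroDivisors_of_noZeroDivisors hg
  let _ : Algebra Bg L := IsLocalization.localizationAlgebraOfSubmonoidLe Bg L _ _ hle
  have : IsScalarTower B Bg L :=
    IsLocalization.localization_isScalarTower_of_submonoid_le Bg L _ _ hle
  have : IsFractionRing Bg L :=
    IsFractionRing.isFractionRing_of_isLocalization (Submonoid.powers (ι g)) Bg L hle
  have hmap (a : A) : Localization.awayMap ι g (algebraMap A _ a) = algebraMap B Bg (ι a) :=
    IsLocalization.map_eq _ _
  obtain ⟨E, hE⟩ := IsLocalization.exists_derivation_extend L (nonZeroDivisors Bg) Dg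
  have hED : E = D := huniq E fun a => by
    rw [IsScalarTower.algebraMap_apply B Bg L, ← hmap, hE, hDg, hδg, hmap,
      ← IsScalarTower.algebraMap_apply]
  obtain ⟨⟨x, s⟩, hs⟩ := IsLocalization.surj (Submonoid.powers (ι g)) (Dg (algebraMap B Bg b))
  dsimp only at hs
  obtain ⟨n, hn : ι g ^ n = s⟩ := s.2
  refine ⟨n, Submodule.mem_colon_singleton.mpr (Submodule.mem_one.mpr ⟨x, ?_⟩)⟩
  rw [← hED, IsScalarTower.algebraMap_apply B Bg L b, hE, Algebra.smul_def, hn,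
    IsScalarTower.algebraMap_apply B Bg L x, IsScalarTower.algebraMap_apply B Bg L s, ← map_mul,
    mul_comm, hs]

theorem existsUnique_derivation_of_forall_mem_one
    (hD : ∀ a, D (algebraMap B L (ι a)) = algebraMap B L (ι (δ a)))
    (huniq : ∀ E : Derivation ℤ L L,
      (∀ a, E (algebraMap B L (ι a)) = algebraMap B L (ι (δ a))) → E = D)
    (hB : ∀ b, D (algebraMap B L b) ∈ (1 : Submodule B L)) :
    ∃! D' : Derivation ℤ B B, ∀ a, D' (ι a) = ι (δ a) := by
  have hinj : Function.Injective (algebraMap B L) := IsFractionRing.injective B L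
  obtain ⟨D', hD'⟩ := D.exists_restrict hinj hB
  refine ⟨D', fun a => hinj (by rw [hD', hD]), fun D'' hD'' => Derivation.ext fun b => hinj ?_⟩
  obtain ⟨E, hE⟩ := IsLocalization.exists_derivation_extend L (nonZeroDivisors B) D''
  rw [hD', ← huniq E fun a => by rw [hE, hD''], hE]

end ExtensionThroughFractionField

/-- Let `B` be a noetherian normal domain and `A` a subring. If
`(Frac A, Frac B) ∈ EXT`, `(A_{fᵢ}, B_{fᵢ}) ∈ EXT` for a family of nonzero `fᵢ ∈ A` no
height-one prime of `B` contains all of, then `(A, B) ∈ EXT`. -/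
theorem statement11 {B : Type*} [CommRing B] [IsDomain B] [IsNoetherianRing B]
    [IsIntegrallyClosed B]
    (A : Subring B)
    (K L : Type*) [Field K] [Field L] [Algebra A K] [IsFractionRing A K]
    [Algebra B L] [IsFractionRing B L]
    (φ : K →+* L) (hφ : ∀ a : A, φ (algebraMap A K a) = algebraMap B L (a : B))
    (hExtFrac : MemEXT φ)
    {I : Type*} (f : I → A) (hf0 : ∀ i, f i ≠ 0)
    (hExtLoc : ∀ i : I, MemEXT (Localization.awayMap A.subtype (f i)))
    (hht : ∀ p : Ideal B, IsHeightOnePrime p → ∃ i, ((f i : B)) ∉ p) :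
    MemEXT A.subtype := by
  intro δ
  have hcomp : φ.comp (algebraMap A K) = (algebraMap B L).comp A.subtype :=
    RingHom.ext hφ
  obtain ⟨D, hD, huniq⟩ := (hcomp ▸ hExtFrac.comp_algebraMap) δ
  refine existsUnique_derivation_of_forall_mem_one A.subtype δ hD huniq fun b => ?_
  by_contra hb
  obtain ⟨p, hp, hle⟩ := exists_isHeightOnePrime_colon_le hb
  obtain ⟨i, hi⟩ := hht p hp
  obtain ⟨n, hn⟩ := pow_mem_colon_of_memEXT_away A.subtype δ huniq
    (fun h => hf0 i (Subtype.ext h)) (hExtLoc i) b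
  exact hi (hp.1.mem_of_pow_mem n (hle hn))
end

section
/- Let A be a commutative ring, A[X] = A[X_1, …, X_n] a polynomial ring in n variables, f_1, …, f_n ∈ A[X], B = A[X]/(f_1, …, f_n), and π : A[X] → B the canonical quotient homomorphism. Let P ∈ A[X] be the determinant of the Jacobian matrix (∂f_i/∂X_j). If π(P) is a unit of B, then (A, B) ∈ EXT, i.e., every derivation δ : A → A extends uniquely to a derivation D : B → B. -/
open MvPolynomial

theorem Derivation.map_mem_span {R S : Type*} [CommSemiring R] [CommRing S] [Algebra R S]
    (D : Derivation R S S) {s : Set S} (hs : ∀ x ∈ s, D x ∈ Ideal.span s) {x : S}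
    (hx : x ∈ Ideal.span s) : D x ∈ Ideal.span s := by
  induction hx using Submodule.span_induction with
  | mem x hx => exact hs x hx
  | zero => simp
  | add x y _ _ hx hy => simpa using add_mem hx hy
  | smul r x hx' hx =>
    rw [smul_eq_mul, D.leibniz]
    exact add_mem (Ideal.mul_mem_left _ r hx) (Ideal.mul_mem_right _ _ hx')

namespace MvPolynomial

variable {σ A : Type*} [CommRing A]

noncomputable def mapCoeffsDerivation (δ : Derivation ℤ A A) :
    Derivation ℤ (MvPolynomial σ A) (MvPolynomial σ A) :=
  Derivation.mk'
    (AddMonoidHom.toIntLinearMap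
      { toFun := AddMonoidAlgebra.map (δ : A →+ A)
        map_zero' := AddMonoidAlgebra.map_zero _
        map_add' := AddMonoidAlgebra.map_add _ })
    fun p q => by
      classical
      rw [smul_eq_mul, smul_eq_mul, mul_comm q]
      ext m
      simp only [AddMonoidHom.coe_toIntLinearMap, AddMonoidHom.coe_mk, ZeroHom.coe_mk,
        coeff_addMonoidAlgebraMap, AddMonoidHom.coe_coe, coeff_add, coeff_mul, map_sum,
        ← Finset.sum_add_distrib]
      exact Finset.sum_congr rfl fun _ _ => by
        rw [δ.leibniz, smul_eq_mul, smul_eq_mul]; ring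

@[simp]
theorem coeff_mapCoeffsDerivation (δ : Derivation ℤ A A) (p : MvPolynomial σ A) (m : σ →₀ ℕ) :
    coeff m (mapCoeffsDerivation δ p) = δ (coeff m p) := rfl

theorem mapCoeffsDerivation_C (δ : Derivation ℤ A A) (a : A) :
    mapCoeffsDerivation δ (C a : MvPolynomial σ A) = C (δ a) := by
  classical
  ext m
  simp only [coeff_mapCoeffsDerivation, coeff_C, apply_ite δ, map_zero]

noncomputable def jacobianMatrix {ι : Type*} (f : ι → MvPolynomial σ A) :
    Matrix ι σ (MvPolynomial σ A) :=
  Matrix.of fun i j => pderiv j (f i)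

variable [Fintype σ]

theorem derivation_map_eq_sum_pderiv_smul {R S M : Type*} [CommSemiring R] [CommSemiring S]
    [Algebra R S] [AddCommMonoid M] [Module S M] [Module R M] (φ : MvPolynomial σ A →+* S)
    (D : Derivation R S M) (hC : ∀ a, D (φ (C a)) = 0) (p : MvPolynomial σ A) :
    D (φ p) = ∑ j, φ (pderiv j p) • D (φ (X j)) := by
  classical
  induction p using MvPolynomial.induction_on with
  | C a => simp [hC]
  | add p q hp hq => simp only [map_add, hp, hq, add_smul, Finset.sum_add_distrib]
  | mul_X p i hp =>
    simp [pderiv_X, Pi.single_apply, apply_ite φ, ite_smul, add_smul, mul_smul,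
      Finset.sum_add_distrib, ← Finset.smul_sum, hp]

variable [DecidableEq σ]

theorem derivation_eq_of_isUnit_jacobian {S : Type*} [CommRing S] {φ : MvPolynomial σ A →+* S}
    (hφ : Function.Surjective φ) {f : σ → MvPolynomial σ A} (hf : ∀ i, φ (f i) = 0)
    (hJ : IsUnit (φ (jacobianMatrix f).det)) {D₁ D₂ : Derivation ℤ S S}
    (h : ∀ a, D₁ (φ (C a)) = D₂ (φ (C a))) : D₁ = D₂ := by
  set E := D₁ - D₂
  have hEC : ∀ a, E (φ (C a)) = 0 := fun a => sub_eq_zero.mpr (h a)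
  have hEX : ∀ j, E (φ (X j)) = 0 := by
    have hJφ : IsUnit (φ.mapMatrix (jacobianMatrix f)) := by
      rwa [Matrix.isUnit_iff_isUnit_det, ← RingHom.map_det]
    refine congrFun (Matrix.mulVec_injective_of_isUnit hJφ
      ((?_ : _ = (0 : σ → S)).trans (Matrix.mulVec_zero _).symm))
    ext i
    rw [Pi.zero_apply, ← map_zero E, ← hf i, derivation_map_eq_sum_pderiv_smul φ E hEC]
    rfl
  suffices E = 0 from sub_eq_zero.mp this
  ext x
  obtain ⟨p, rfl⟩ := hφ x
  simp [derivation_map_eq_sum_pderiv_smul φ E hEC p, hEX]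

theorem exists_derivation_map_C_of_isUnit_jacobian {I : Ideal (MvPolynomial σ A)}
    {f : σ → MvPolynomial σ A} (hJ : IsUnit (Ideal.Quotient.mk I (jacobianMatrix f).det))
    (δ : Derivation ℤ A A) :
    ∃ D : Derivation ℤ (MvPolynomial σ A) (MvPolynomial σ A),
      (∀ a, D (C a) = C (δ a)) ∧ ∀ i, D (f i) ∈ I := by
  have hJI : IsUnit ((Ideal.Quotient.mk I).mapMatrix (jacobianMatrix f)) := by
    rwa [Matrix.isUnit_iff_isUnit_det, ← RingHom.map_det]
  obtain ⟨b, hb⟩ := Matrix.mulVec_surjective_iff_isUnit.mpr hJI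
    fun i => -Ideal.Quotient.mk I (mapCoeffsDerivation δ (f i))
  choose g hg using fun j => Ideal.Quotient.mk_surjective (I := I) (b j)
  have hg_sum : ∀ p, mkDerivation A g p = ∑ j, pderiv j p * g j := fun p => by
    simpa using derivation_map_eq_sum_pderiv_smul (RingHom.id _) (mkDerivation A g)
      (fun a => derivation_C _ a) p
  refine ⟨mapCoeffsDerivation δ + (mkDerivation A g).restrictScalars ℤ, fun a => ?_, fun i => ?_⟩
  · simp [mapCoeffsDerivation_C]
  · rw [← Ideal.Quotient.eq_zero_iff_mem, Derivation.add_apply, map_add,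
      Derivation.restrictScalars_apply, hg_sum, map_sum]
    simp only [map_mul, hg]
    exact (add_comm _ _).trans (eq_neg_iff_add_eq_zero.mp (congrFun hb i))

end MvPolynomial

/-- Let `A` be a commutative ring, `B = A[X₁,…,Xₙ]/(f₁,…,fₙ)` and `π` the
quotient map. If the image under `π` of the Jacobian determinant `det(∂fᵢ/∂Xⱼ)` is a unit of
`B`, then `(A, B) ∈ EXT`. -/
theorem statement12 {A : Type*} [CommRing A] (n : ℕ)
    (f : Fin n → MvPolynomial (Fin n) A)
    (hP : IsUnit (Ideal.Quotient.mk (Ideal.span (Set.range f))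
      ((Matrix.of fun i j : Fin n => MvPolynomial.pderiv j (f i)).det))) :
    MemEXT ((Ideal.Quotient.mk (Ideal.span (Set.range f))).comp
      (MvPolynomial.C : A →+* MvPolynomial (Fin n) A)) := by
  intro δ
  set I := Ideal.span (Set.range f)
  obtain ⟨D, hDC, hDf⟩ := exists_derivation_map_C_of_isUnit_jacobian hP δ
  have hDI : ∀ x, (Ideal.Quotient.mkₐ ℤ I) x = 0 → (Ideal.Quotient.mkₐ ℤ I) (D x) = 0 := by
    simp only [Ideal.Quotient.mkₐ_eq_mk, Ideal.Quotient.eq_zero_iff_mem]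
    exact fun x hx => D.map_mem_span (by rintro _ ⟨i, rfl⟩; exact hDf i) hx
  have hB : ∀ a, Derivation.liftOfSurjective (Ideal.Quotient.mkₐ_surjective ℤ I) hDI
      (Ideal.Quotient.mk I (C a)) = Ideal.Quotient.mk I (C (δ a)) := fun a => by
    rw [← hDC, ← Ideal.Quotient.mkₐ_eq_mk ℤ, Derivation.liftOfSurjective_apply]
  refine ⟨_, hB, fun D' hD' => derivation_eq_of_isUnit_jacobian Ideal.Quotient.mk_surjective
    (fun i => Ideal.Quotient.eq_zero_iff_mem.mpr (Ideal.subset_span (Set.mem_range_self i))) hP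
    fun a => (hD' a).trans (hB a).symm⟩
end

section
/- Let G be an abelian group, B = ⊕_{i∈G} B_i a G-graded commutative ring, and R a subring of B_0. If B is finitely generated as an R-algebra, then for every subgroup H of G the graded subring B^{(H)} = ⊕_{i∈H} B_i is finitely generated as an R-algebra. -/
/-!
Choose homogeneous generators `x₁, …, xₙ` of `B` over `R`, of degrees `d₁, …, dₙ`. The exponent
vectors `e ∈ ℕⁿ` with `∑ eⱼ dⱼ ∈ H` form a submonoid of `ℕⁿ` closed under subtraction, which is
finitely generated by Dickson's lemma. The monomials `x ^ e` for its generators `e` generate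
`B^{(H)}` over `R`: every `b ∈ B_i` is the `i`-th component of a sum of terms `r * x ^ e` with
`r ∈ R ⊆ B₀`, and such a component is `r * x ^ e` itself when `∑ eⱼ dⱼ = i`, and `0` otherwise.
-/

open DirectSum

theorem AddSubmonoid.fg_comap_toAddSubmonoid {M G : Type*} [AddCommMonoid M] [PartialOrder M]
    [WellQuasiOrderedLE M] [IsOrderedCancelAddMonoid M] [CanonicallyOrderedAdd M]
    [AddCommGroup G] (φ : M →+ G) (H : AddSubgroup G) :
    (H.toAddSubmonoid.comap φ).FG :=
  fg_of_subtractive fun x hx y hxy => by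
    simpa using H.sub_mem (x := φ (x + y)) hxy hx

theorem Finset.prod_pow_mem_submonoidClosure_image {ι M : Type*} [Fintype ι] [CommMonoid M]
    (x : ι → M) {E : Set (ι → ℕ)} {e : ι → ℕ} (he : e ∈ AddSubmonoid.closure E) :
    ∏ j, x j ^ e j ∈ Submonoid.closure ((fun e : ι → ℕ => ∏ j, x j ^ e j) '' E) := by
  induction he using AddSubmonoid.closure_induction with
  | mem e he => exact Submonoid.subset_closure (Set.mem_image_of_mem _ he)
  | zero =>
    simp only [Pi.zero_apply, pow_zero, Finset.prod_const_one]
    exact one_mem _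
  | add e f _ _ he hf =>
    simp only [Pi.add_apply, pow_add, Finset.prod_mul_distrib]
    exact mul_mem he hf

namespace GradedRing

section AddCommMonoid

variable {G B : Type*} [AddCommMonoid G] [DecidableEq G] [CommRing B]
  (𝒜 : G → AddSubgroup B) [GradedRing 𝒜]

theorem exists_finset_isHomogeneousElem_closure_union_eq_top {S : Set B} {s : Finset B}
    (hs : Subring.closure (S ∪ s) = ⊤) :
    ∃ t : Finset B, (∀ y ∈ t, SetLike.IsHomogeneousElem 𝒜 y) ∧ Subring.closure (S ∪ t) = ⊤ := by
  classical
  let t := s.biUnion fun b => (decompose 𝒜 b).support.image fun i => (decompose 𝒜 b i : B)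
  refine ⟨t, ?_, top_unique <| hs ▸ Subring.closure_le.2 <| Set.union_subset
    (Set.subset_union_left.trans Subring.subset_closure) fun b hb => ?_⟩
  · simp only [t, Finset.mem_biUnion, Finset.mem_image]
    rintro _ ⟨b, -, i, -, rfl⟩
    exact ⟨i, SetLike.coe_mem _⟩
  · rw [SetLike.mem_coe, ← sum_support_decompose 𝒜 b]
    refine sum_mem fun i hi => Subring.subset_closure (.inr ?_)
    simp only [t, Finset.coe_biUnion, Finset.coe_image, Set.mem_iUnion, Set.mem_image]
    exact ⟨b, hb, i, hi, rfl⟩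

theorem coe_subset_of_prod_pow_mem {ι : Type*} [Fintype ι] {x : ι → B} {d : ι → G}
    (hx : ∀ j, x j ∈ 𝒜 (d j)) {R D : Subring B} (hR : (R : Set B) ⊆ 𝒜 0)
    (htop : Subring.closure ((R : Set B) ∪ Set.range x) = ⊤) (hRD : R ≤ D) {i : G}
    (hD : ∀ e : ι → ℕ, ∑ j, e j • d j = i → ∏ j, x j ^ e j ∈ D) :
    (𝒜 i : Set B) ⊆ D := by
  have hproj : (Submonoid.closure ((R : Set B) ∪ Set.range x) : Set B) ⊆
      AddSubgroup.comap (proj 𝒜 i) D.toAddSubgroup := by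
    intro y hy
    rw [SetLike.mem_coe, Submonoid.closure_union, Submonoid.mem_sup] at hy
    obtain ⟨r, hr, _, hm, rfl⟩ := hy
    replace hr : r ∈ R := Submonoid.closure_le (S := R.toSubmonoid) |>.2 subset_rfl hr
    obtain ⟨e, rfl⟩ := Submonoid.mem_closure_range_iff_of_fintype.1 hm
    have hmem : ∏ j, x j ^ e j ∈ 𝒜 (∑ j, e j • d j) :=
      SetLike.prod_pow_mem_graded 𝒜 d _ e fun j _ => hx j
    change (decompose 𝒜 (r * _) i : B) ∈ D
    rw [coe_decompose_mul_of_left_mem_zero 𝒜 (hR hr)]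
    by_cases hi : ∑ j, e j • d j = i
    · rw [decompose_of_mem_same 𝒜 (hi ▸ hmem)]
      exact mul_mem (hRD hr) (hD e hi)
    · rw [decompose_of_mem_ne 𝒜 hmem hi, mul_zero]
      exact zero_mem D
  intro b hb
  have hb' : b ∈ AddSubgroup.closure (Submonoid.closure ((R : Set B) ∪ Set.range x) : Set B) := by
    rw [← Subring.mem_closure_iff, htop]
    exact Subring.mem_top b
  have := (AddSubgroup.closure_le _).2 hproj hb'
  rwa [AddSubgroup.mem_comap, proj_apply, decompose_of_mem_same 𝒜 hb] at this

end AddCommMonoid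

variable {G B : Type*} [AddCommGroup G] [DecidableEq G] [CommRing B]
  (𝒜 : G → AddSubgroup B) [GradedRing 𝒜]

theorem exists_finset_closure_union_eq_closure_biUnion {ι : Type*} [Fintype ι] {x : ι → B}
    {d : ι → G} (hx : ∀ j, x j ∈ 𝒜 (d j)) {R : Subring B} (hR : (R : Set B) ⊆ 𝒜 0)
    (htop : Subring.closure ((R : Set B) ∪ Set.range x) = ⊤) (H : AddSubgroup G) :
    ∃ t : Finset B, (t : Set B) ⊆ Subring.closure (⋃ i ∈ H, (𝒜 i : Set B)) ∧
      Subring.closure ((R : Set B) ∪ t) = Subring.closure (⋃ i ∈ H, (𝒜 i : Set B)) := by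
  classical
  set φ := (Fintype.linearCombination ℕ d).toAddMonoidHom
  have hφ (e : ι → ℕ) : φ e = ∑ j, e j • d j := Fintype.linearCombination_apply ..
  obtain ⟨E, hE⟩ := AddSubmonoid.fg_comap_toAddSubmonoid φ H
  have hEH {e : ι → ℕ} : e ∈ AddSubmonoid.closure (E : Set (ι → ℕ)) ↔ φ e ∈ H := by
    rw [hE]; rfl
  set mono : (ι → ℕ) → B := fun e => ∏ j, x j ^ e j
  have hsub : (E.image mono : Set B) ⊆ Subring.closure (⋃ i ∈ H, (𝒜 i : Set B)) := by
    rw [Finset.coe_image]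
    rintro _ ⟨e, he, rfl⟩
    refine Subring.subset_closure <| Set.mem_biUnion (hEH.1 (AddSubmonoid.subset_closure he)) ?_
    rw [hφ]
    exact SetLike.prod_pow_mem_graded 𝒜 d _ e fun j _ => hx j
  refine ⟨E.image mono, hsub, le_antisymm ?_ ?_⟩
  · refine Subring.closure_le.2 (Set.union_subset (fun r hr => ?_) hsub)
    exact Subring.subset_closure (Set.mem_biUnion H.zero_mem (hR hr))
  refine Subring.closure_le.2 <| Set.iUnion₂_subset fun i hi =>
    coe_subset_of_prod_pow_mem 𝒜 hx hR htop (fun r hr => Subring.subset_closure (.inl hr))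
      fun e he => ?_
  have hmem := Finset.prod_pow_mem_submonoidClosure_image x <| hEH.2 (by rwa [hφ, he])
  refine Submonoid.closure_le (S := (Subring.closure _).toSubmonoid) |>.2 ?_ hmem
  rw [← Finset.coe_image]
  exact Set.subset_union_right.trans Subring.subset_closure

end GradedRing

open GradedRing in
/-- Let `G` be an abelian group, `B` a `G`-graded ring, `R` a subring of
`B₀`. If `B` is a finitely generated `R`-algebra, then so is `B^{(H)} = ⊕_{i∈H} B_i` for
every subgroup `H` of `G`. -/
theorem statement13 {G B : Type*} [AddCommGroup G] [DecidableEq G] [CommRing B]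
    (𝒜 : G → AddSubgroup B) [GradedRing 𝒜]
    (R : Subring B) (hR : (R : Set B) ⊆ (𝒜 0 : Set B))
    (hfg : ∃ s : Finset B, Subring.closure ((R : Set B) ∪ (s : Set B)) = ⊤)
    (H : AddSubgroup G) :
    ∃ t : Finset B,
      (t : Set B) ⊆ (Subring.closure (⋃ i ∈ H, (𝒜 i : Set B)) : Set B) ∧
      Subring.closure ((R : Set B) ∪ (t : Set B)) =
        Subring.closure (⋃ i ∈ H, (𝒜 i : Set B)) := by
  obtain ⟨s, hs⟩ := hfg
  obtain ⟨t, ht, htop⟩ := exists_finset_isHomogeneousElem_closure_union_eq_top 𝒜 hs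
  choose d hd using fun y : t => ht y y.2
  exact exists_finset_closure_union_eq_closure_biUnion 𝒜 hd hR (by rwa [Subtype.range_coe]) H
end

section
/- Let G be a torsion-free abelian group and R = ⊕_{i∈G} R_i a G-graded integral domain which is finitely generated as an algebra over a field of characteristic zero. If R is non-rigid, then there exists a nonzero homogeneous locally nilpotent derivation D : R → R. -/
/-!
Embed the torsion-free group `G` into a linearly ordered group by `φ`. In a domain graded by an
ordered group, units are homogeneous (compare the top and bottom components of `u * u⁻¹ = 1`),
and in characteristic zero a locally nilpotent derivation `D` kills units, in particular `k`.
Hence only finitely many homogeneous components `D_e` of `D` are nonzero, `R` being finitely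
generated over `k`. Let `d` maximise `φ` among the `e` with `D_e ≠ 0`: for `x` homogeneous of
degree `g`, the degree-`g + n • d` component of `Dⁿ x` is `D_dⁿ x`, so `D_d` is locally nilpotent.
-/

open Finset DirectSum

universe u

theorem IsAddTorsionFree.of_nsmul_eq_zero {G : Type*} [AddCommGroup G]
    (h : ∀ (g : G) (n : ℕ), 0 < n → n • g = 0 → g = 0) : IsAddTorsionFree G where
  nsmul_right_injective n hn a b hab :=
    sub_eq_zero.mp (h _ n (Nat.pos_of_ne_zero hn) (by simpa [nsmul_sub, sub_eq_zero] using hab))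

theorem IsAddTorsionFree.exists_injective_addMonoidHom_linearOrder (G : Type u) [AddCommGroup G]
    [IsAddTorsionFree G] :
    ∃ (L : Type u) (_ : AddCommGroup L) (_ : LinearOrder L) (_ : IsOrderedAddMonoid L)
      (φ : G →+ L), Function.Injective φ := by
  let b := Module.Basis.ofVectorSpace ℚ (DivisibleHull G)
  let : LinearOrder (Module.Basis.ofVectorSpaceIndex ℚ (DivisibleHull G)) :=
    IsWellOrder.linearOrder WellOrderingRel
  exact ⟨Lex (_ →₀ ℚ), inferInstance, inferInstance, inferInstance,
    b.repr.toAddMonoidHom.comp (DivisibleHull.coeAddMonoidHom G),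
    b.repr.injective.comp DivisibleHull.coe_injective⟩

namespace Derivation

theorem iterate_leibniz {R A : Type*} [CommSemiring R] [CommSemiring A] [Algebra R A]
    (D : Derivation R A A) (n : ℕ) (a b : A) :
    (⇑D)^[n] (a * b) =
      ∑ ij ∈ antidiagonal n, n.choose ij.1 • ((⇑D)^[ij.1] a * (⇑D)^[ij.2] b) := by
  induction n with
  | zero => simp
  | succ n ih =>
    rw [Finset.sum_antidiagonal_choose_succ_nsmul (fun i j => (⇑D)^[i] a * (⇑D)^[j] b),
      Function.iterate_succ_apply', ih, map_sum]
    simp only [map_nsmul, leibniz, smul_eq_mul, nsmul_add, sum_add_distrib,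
      Function.iterate_succ_apply']
    congr 1
    exact sum_congr rfl fun ij hij => by
      rw [Nat.choose_symm_of_eq_add (HasAntidiagonal.mem_antidiagonal.mp hij).symm, mul_comm]

variable {A : Type*} [CommRing A] {D : Derivation ℤ A A}

theorem iterate_eq_zero_of_le {a : A} {m n : ℕ} (h : (⇑D)^[m] a = 0) (hmn : m ≤ n) :
    (⇑D)^[n] a = 0 := by
  obtain ⟨k, rfl⟩ := Nat.exists_eq_add_of_le hmn
  rw [add_comm, Function.iterate_add_apply, h, iterate_map_zero]

theorem isLocallyNilpotentD_iff : D.IsLocallyNilpotentD ↔ ∀ b, ∃ n, (⇑D)^[n] b = 0 :=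
  ⟨fun hD b => (hD b).imp fun _ h => h.2, fun hD b =>
    let ⟨n, hn⟩ := hD b
    ⟨n + 1, n.succ_pos, iterate_eq_zero_of_le hn n.le_succ⟩⟩

theorem IsLocallyNilpotentD.exists_iterate_ne_zero_iterate_succ_eq_zero
    (hD : D.IsLocallyNilpotentD) {a : A} (ha : a ≠ 0) :
    ∃ n, (⇑D)^[n] a ≠ 0 ∧ (⇑D)^[n + 1] a = 0 := by
  classical
  have hex : ∃ n, (⇑D)^[n] a = 0 := isLocallyNilpotentD_iff.mp hD a
  obtain ⟨n, hn⟩ : ∃ n, Nat.find hex = n + 1 :=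
    Nat.exists_eq_succ_of_ne_zero fun h => ha (by simpa [h] using Nat.find_spec hex)
  exact ⟨n, Nat.find_min hex (by omega), hn ▸ Nat.find_spec hex⟩

/-- In the Leibniz expansion only the term `(m, n)` survives. -/
theorem iterate_add_mul_ne_zero [IsDomain A] [CharZero A] {a b : A} {m n : ℕ}
    (ha : (⇑D)^[m] a ≠ 0) (ha' : (⇑D)^[m + 1] a = 0)
    (hb : (⇑D)^[n] b ≠ 0) (hb' : (⇑D)^[n + 1] b = 0) :
    (⇑D)^[m + n] (a * b) ≠ 0 := by
  rw [iterate_leibniz, sum_eq_single (m, n)]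
  · exact smul_ne_zero (Nat.choose_pos (Nat.le_add_right m n)).ne' (mul_ne_zero ha hb)
  · rintro ⟨i, j⟩ hij hne
    rw [HasAntidiagonal.mem_antidiagonal] at hij
    rcases Nat.lt_or_gt_of_ne (fun h : i = m => hne (by ext <;> simp <;> omega)) with hi | hi
    · rw [iterate_eq_zero_of_le hb' (by omega), mul_zero, smul_zero]
    · rw [iterate_eq_zero_of_le ha' hi, zero_mul, smul_zero]
  · simp

theorem IsLocallyNilpotentD.apply_eq_zero_of_isUnit [IsDomain A] [CharZero A]
    (hD : D.IsLocallyNilpotentD) {u : A} (hu : IsUnit u) : D u = 0 := by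
  obtain ⟨v, huv⟩ := hu.exists_right_inv
  obtain ⟨m, hm, hm'⟩ := hD.exists_iterate_ne_zero_iterate_succ_eq_zero hu.ne_zero
  obtain ⟨n, hn, hn'⟩ :=
    hD.exists_iterate_ne_zero_iterate_succ_eq_zero (right_ne_zero_of_mul_eq_one huv)
  have hprod := iterate_add_mul_ne_zero hm hm' hn hn'
  rw [huv] at hprod
  obtain rfl : m = 0 := by
    by_contra h
    exact hprod (iterate_eq_zero_of_le (m := 1) (by simp) (by omega))
  exact hm'

theorem eq_zero_of_adjoin_eq_top {k : Type*} [CommSemiring k] [Algebra k A]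
    (D : Derivation ℤ A A) {s : Set A} (hs : Algebra.adjoin k s = ⊤)
    (hk : ∀ c : k, D (algebraMap k A c) = 0) (h : ∀ x ∈ s, D x = 0) : D = 0 := by
  ext x
  induction (hs ▸ Algebra.mem_top : x ∈ Algebra.adjoin k s) using Algebra.adjoin_induction with
  | mem y hy => exact h y hy
  | algebraMap c => exact hk c
  | add y z _ _ hy hz => simp [hy, hz]
  | mul y z _ _ hy hz => simp [hy, hz]

end Derivation

section Graded

variable {G R : Type*} [AddCommGroup G] [DecidableEq G] [CommRing R]
  (𝒜 : G → AddSubgroup R) [GradedRing 𝒜]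

namespace DirectSum

theorem exists_coe_decompose_ne_zero_isMax {β : Type*} [LinearOrder β] (ψ : G → β) {x : R}
    (hx : x ≠ 0) :
    ∃ p, (decompose 𝒜 x p : R) ≠ 0 ∧ ∀ i, (decompose 𝒜 x i : R) ≠ 0 → ψ i ≤ ψ p := by
  classical
  have hne : (decompose 𝒜 x).support.Nonempty := by
    rw [nonempty_iff_ne_empty, Ne, DFinsupp.support_eq_empty, ← decompose_zero 𝒜]
    exact (decompose 𝒜).injective.ne hx
  obtain ⟨p, hp, hpmax⟩ := exists_max_image _ ψ hne
  refine ⟨p, by simpa using hp, fun i hi => hpmax i (by simpa using hi)⟩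

section Units

variable {L : Type*} [AddCommGroup L] [LinearOrder L] [IsOrderedAddMonoid L]

theorem coe_decompose_mul_add_ne_zero_of_isMax [IsDomain R] {φ : G →+ L}
    (hφ : Function.Injective φ) {x y : R} {p q : G}
    (hp : (decompose 𝒜 x p : R) ≠ 0) (hq : (decompose 𝒜 y q : R) ≠ 0)
    (hpmax : ∀ i, (decompose 𝒜 x i : R) ≠ 0 → φ i ≤ φ p)
    (hqmax : ∀ j, (decompose 𝒜 y j : R) ≠ 0 → φ j ≤ φ q) :
    (decompose 𝒜 (x * y) (p + q) : R) ≠ 0 := by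
  classical
  rw [decompose_mul, coe_mul_apply, sum_eq_single (p, q)]
  · exact mul_ne_zero hp hq
  · rintro ⟨i, j⟩ hij hne
    simp only [mem_filter, mem_product, DFinsupp.mem_support_iff, ne_eq] at hij
    obtain ⟨⟨hi, hj⟩, hsum⟩ := hij
    have hi' := hpmax i (by simpa using hi)
    have hj' := hqmax j (by simpa using hj)
    have hφsum : φ i + φ j = φ p + φ q := by rw [← map_add, ← map_add, hsum]
    have hpi : φ p ≤ φ i := le_of_add_le_add_right (a := φ q) (by
      calc φ p + φ q = φ i + φ j := hφsum.symm
        _ ≤ φ i + φ q := by gcongr)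
    obtain rfl : i = p := hφ (le_antisymm hi' hpi)
    obtain rfl : j = q := add_left_cancel hsum
    exact absurd rfl hne
  · intro h
    refine absurd (mem_filter.mpr ⟨mem_product.mpr ⟨?_, ?_⟩, ?_⟩) h <;>
      simp_all

/-- The `φ`-top components of `u` and `v` give a nonzero component of `u * v = 1`. -/
theorem exists_isMax_add_eq_zero_of_mul_eq_one [IsDomain R] {φ : G →+ L}
    (hφ : Function.Injective φ) {u v : R} (huv : u * v = 1) :
    ∃ p q, (decompose 𝒜 u p : R) ≠ 0 ∧ (∀ i, (decompose 𝒜 u i : R) ≠ 0 → φ i ≤ φ p) ∧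
      (decompose 𝒜 v q : R) ≠ 0 ∧ (∀ j, (decompose 𝒜 v j : R) ≠ 0 → φ j ≤ φ q) ∧
      p + q = 0 := by
  obtain ⟨p, hp, hpmax⟩ := exists_coe_decompose_ne_zero_isMax 𝒜 φ (left_ne_zero_of_mul_eq_one huv)
  obtain ⟨q, hq, hqmax⟩ := exists_coe_decompose_ne_zero_isMax 𝒜 φ (right_ne_zero_of_mul_eq_one huv)
  refine ⟨p, q, hp, hpmax, hq, hqmax, by_contra fun hpq => ?_⟩
  have := coe_decompose_mul_add_ne_zero_of_isMax 𝒜 hφ hp hq hpmax hqmax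
  rw [huv, decompose_of_mem_ne 𝒜 (SetLike.one_mem_graded 𝒜) (Ne.symm hpq)] at this
  exact this rfl

/-- The `φ`-bottom components are the `-φ`-top components. -/
theorem isHomogeneousElem_of_isUnit [IsDomain R] {φ : G →+ L} (hφ : Function.Injective φ)
    {u : R} (hu : IsUnit u) : SetLike.IsHomogeneousElem 𝒜 u := by
  classical
  obtain ⟨v, huv⟩ := hu.exists_right_inv
  obtain ⟨p, q, hp, hpmax, -, hqmax, hpq⟩ := exists_isMax_add_eq_zero_of_mul_eq_one 𝒜 hφ huv
  obtain ⟨p', q', -, hpmin, hq', -, hpq'⟩ :=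
    exists_isMax_add_eq_zero_of_mul_eq_one 𝒜 (φ := -φ) (neg_injective.comp hφ) huv
  have hφpq : φ p + φ q = φ p' + φ q' := by rw [← map_add, ← map_add, hpq, hpq']
  have hp'p : φ p' ≤ φ p := by simpa using hpmin p hp
  have hpp' : φ p ≤ φ p' := le_of_add_le_add_right (a := φ q) (by
    calc φ p + φ q = φ p' + φ q' := hφpq
      _ ≤ φ p' + φ q := by gcongr; exact hqmax q' hq')
  have hsupp : ∀ i ∈ (decompose 𝒜 u).support, i = p := fun i hi => by
    have hi : (decompose 𝒜 u i : R) ≠ 0 := by simpa using hi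
    exact hφ (le_antisymm (hpmax i hi) (hpp'.trans (by simpa using hpmin i hi)))
  refine ⟨p, ?_⟩
  rw [← sum_support_decompose 𝒜 u]
  exact AddSubgroup.sum_mem _ fun i hi => hsupp i hi ▸ SetLike.coe_mem _

end Units

end DirectSum

namespace Derivation

variable (D : Derivation ℤ R R)

noncomputable def homogeneousComponentAddHom (e : G) : R →+ R :=
  (toAddMonoid fun g => (GradedRing.proj 𝒜 (g + e)).comp ((D : R →+ R).comp (𝒜 g).subtype)).comp
    (decomposeAddEquiv 𝒜).toAddMonoidHom

theorem homogeneousComponentAddHom_apply_of_mem {g : G} {x : R} (hx : x ∈ 𝒜 g) (e : G) :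
    homogeneousComponentAddHom 𝒜 D e x = decompose 𝒜 (D x) (g + e) := by
  simp [homogeneousComponentAddHom, decompose_of_mem 𝒜 hx, GradedRing.proj_apply]

theorem homogeneousComponentAddHom_mul (e : G) (a b : R) :
    homogeneousComponentAddHom 𝒜 D e (a * b) =
      a * homogeneousComponentAddHom 𝒜 D e b + b * homogeneousComponentAddHom 𝒜 D e a := by
  induction a using Decomposition.inductionOn 𝒜 with
  | zero => simp
  | add a a' ha ha' => simp only [add_mul, map_add, ha, ha']; ring
  | @homogeneous i a =>
    obtain ⟨a, ha⟩ := a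
    induction b using Decomposition.inductionOn 𝒜 with
    | zero => simp
    | add b b' hb hb' => simp only [mul_add, map_add, hb, hb']; ring
    | @homogeneous j b =>
      obtain ⟨b, hb⟩ := b
      simp only [homogeneousComponentAddHom_apply_of_mem 𝒜 D (SetLike.mul_mem_graded ha hb),
        homogeneousComponentAddHom_apply_of_mem 𝒜 D ha,
        homogeneousComponentAddHom_apply_of_mem 𝒜 D hb, leibniz, smul_eq_mul, decompose_add]
      rw [DirectSum.add_apply, AddSubgroup.coe_add, show i + j + e = i + (j + e) by abel,
        coe_decompose_mul_add_of_left_mem 𝒜 ha, show i + (j + e) = j + (i + e) by abel,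
        coe_decompose_mul_add_of_left_mem 𝒜 hb]

noncomputable def homogeneousComponent (e : G) : Derivation ℤ R R :=
  Derivation.mk' (homogeneousComponentAddHom 𝒜 D e).toIntLinearMap
    (homogeneousComponentAddHom_mul 𝒜 D e)

theorem homogeneousComponent_apply_of_mem {g : G} {x : R} (hx : x ∈ 𝒜 g) (e : G) :
    D.homogeneousComponent 𝒜 e x = decompose 𝒜 (D x) (g + e) :=
  homogeneousComponentAddHom_apply_of_mem 𝒜 D hx e

theorem homogeneousComponent_mem {g : G} {x : R} (hx : x ∈ 𝒜 g) (e : G) :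
    D.homogeneousComponent 𝒜 e x ∈ 𝒜 (g + e) := by
  rw [homogeneousComponent_apply_of_mem 𝒜 D hx]
  exact SetLike.coe_mem _

theorem homogeneousComponent_apply_eq_sum [∀ (i : G) (x : 𝒜 i), Decidable (x ≠ 0)] (e : G)
    (x : R) :
    D.homogeneousComponent 𝒜 e x =
      ∑ g ∈ (decompose 𝒜 x).support, (decompose 𝒜 (D (decompose 𝒜 x g)) (g + e) : R) := by
  conv_lhs => rw [← sum_support_decompose 𝒜 x]
  rw [map_sum]
  exact sum_congr rfl fun g _ => homogeneousComponent_apply_of_mem 𝒜 D (SetLike.coe_mem _) e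

theorem coe_decompose_apply_eq_sum [∀ (i : G) (x : 𝒜 i), Decidable (x ≠ 0)] (y : R) (h : G) :
    (decompose 𝒜 (D y) h : R) =
      ∑ g ∈ (decompose 𝒜 y).support, D.homogeneousComponent 𝒜 (h - g) (decompose 𝒜 y g) := by
  conv_lhs => rw [← sum_support_decompose 𝒜 y]
  rw [map_sum, decompose_sum, DFinsupp.finsetSum_apply, AddSubgroup.val_finsetSum]
  refine sum_congr rfl fun g _ => ?_
  rw [homogeneousComponent_apply_of_mem 𝒜 D (SetLike.coe_mem _), add_sub_cancel]

theorem eq_zero_of_forall_homogeneousComponent_eq_zero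
    (hD : ∀ e, D.homogeneousComponent 𝒜 e = 0) : D = 0 := by
  classical
  ext y
  refine (decompose 𝒜).injective (DFinsupp.ext fun h => Subtype.ext ?_)
  simp [coe_decompose_apply_eq_sum, hD]

theorem finite_setOf_homogeneousComponent_apply_ne_zero (x : R) :
    {e | D.homogeneousComponent 𝒜 e x ≠ 0}.Finite := by
  classical
  refine ((decompose 𝒜 x).support.biUnion fun g =>
    (decompose 𝒜 (D (decompose 𝒜 x g))).support.image (· - g)).finite_toSet.subset fun e he => ?_
  rw [Set.mem_ofPred_eq, homogeneousComponent_apply_eq_sum] at he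
  obtain ⟨g, hg, hne⟩ := exists_ne_zero_of_sum_ne_zero he
  simp only [coe_biUnion, coe_image, Set.mem_iUnion, Set.mem_image, mem_coe]
  exact ⟨g, hg, g + e, DFinsupp.mem_support_iff.mpr fun h0 => hne (by simp [h0]),
    add_sub_cancel_left g e⟩

theorem finite_setOf_homogeneousComponent_ne_zero (k : Type*) [CommSemiring k] [Algebra k R]
    [Algebra.FiniteType k R]
    (hk : ∀ (e : G) (c : k), D.homogeneousComponent 𝒜 e (algebraMap k R c) = 0) :
    {e | D.homogeneousComponent 𝒜 e ≠ 0}.Finite := by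
  obtain ⟨s, hs⟩ := Algebra.FiniteType.out (R := k) (A := R)
  refine (s.finite_toSet.biUnion fun x _ =>
    finite_setOf_homogeneousComponent_apply_ne_zero 𝒜 D x).subset fun e he => ?_
  by_contra hcon
  simp only [Set.mem_iUnion, Set.mem_ofPred_eq, mem_coe, not_exists, not_not] at hcon
  exact he (eq_zero_of_adjoin_eq_top _ hs (hk e) hcon)

theorem nonempty_setOf_homogeneousComponent_ne_zero (hD : D ≠ 0) :
    {e | D.homogeneousComponent 𝒜 e ≠ 0}.Nonempty := by
  by_contra h
  exact hD (eq_zero_of_forall_homogeneousComponent_eq_zero 𝒜 D fun e =>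
    by_contra fun he => h ⟨e, he⟩)

theorem isLocallyNilpotentD_of_forall_mem (h : ∀ g, ∀ x ∈ 𝒜 g, ∃ n, (⇑D)^[n] x = 0) :
    D.IsLocallyNilpotentD := by
  refine isLocallyNilpotentD_iff.mpr fun b => ?_
  induction b using Decomposition.inductionOn 𝒜 with
  | zero => exact ⟨0, rfl⟩
  | homogeneous x => exact h _ x x.2
  | add a b ha hb =>
    obtain ⟨m, hm⟩ := ha
    obtain ⟨n, hn⟩ := hb
    refine ⟨max m n, ?_⟩
    rw [iterate_map_add, iterate_eq_zero_of_le hm (le_max_left m n),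
      iterate_eq_zero_of_le hn (le_max_right m n), add_zero]

section TopDegree

variable {L : Type*} [AddCommGroup L] [LinearOrder L] [IsOrderedAddMonoid L] {φ : G →+ L} {d : G}

theorem le_add_of_coe_decompose_apply_ne_zero
    (hd : ∀ e, D.homogeneousComponent 𝒜 e ≠ 0 → φ e ≤ φ d) {y : R} {c : L}
    (hy : ∀ g, (decompose 𝒜 y g : R) ≠ 0 → φ g ≤ c) {h : G}
    (hh : (decompose 𝒜 (D y) h : R) ≠ 0) : φ h ≤ c + φ d := by
  classical
  rw [coe_decompose_apply_eq_sum] at hh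
  obtain ⟨g, -, hne⟩ := exists_ne_zero_of_sum_ne_zero hh
  have hT : D.homogeneousComponent 𝒜 (h - g) ≠ 0 := fun h0 => hne (by simp [h0])
  have hyg : (decompose 𝒜 y g : R) ≠ 0 := fun h0 => hne (by simp [h0])
  calc φ h = φ g + φ (h - g) := by rw [map_sub, add_sub_cancel]
    _ ≤ c + φ d := add_le_add (hy g hyg) (hd _ hT)

theorem coe_decompose_apply_add_eq_homogeneousComponent (hφ : Function.Injective φ)
    (hd : ∀ e, D.homogeneousComponent 𝒜 e ≠ 0 → φ e ≤ φ d) {y : R} {g₀ : G}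
    (hy : ∀ g, (decompose 𝒜 y g : R) ≠ 0 → φ g ≤ φ g₀) :
    (decompose 𝒜 (D y) (g₀ + d) : R) = D.homogeneousComponent 𝒜 d (decompose 𝒜 y g₀) := by
  classical
  rw [coe_decompose_apply_eq_sum, sum_eq_single g₀, add_sub_cancel_left]
  · intro g _ hgg₀
    by_contra hne
    have hT : D.homogeneousComponent 𝒜 (g₀ + d - g) ≠ 0 := fun h0 => hne (by simp [h0])
    have hyg : (decompose 𝒜 y g : R) ≠ 0 := fun h0 => hne (by simp [h0])
    have hle : φ g₀ + φ d - φ g ≤ φ d := by simpa [map_sub, map_add] using hd _ hT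
    rw [sub_le_iff_le_add, add_comm (φ d), add_le_add_iff_right] at hle
    exact hgg₀ (hφ (le_antisymm (hy g hyg) hle))
  · intro hg₀
    rw [DFinsupp.notMem_support_iff.mp hg₀, ZeroMemClass.coe_zero, map_zero]

variable (hφ : Function.Injective φ) (hd : ∀ e, D.homogeneousComponent 𝒜 e ≠ 0 → φ e ≤ φ d)
include hd

theorem le_of_coe_decompose_iterate_apply_ne_zero {g : G} {x : R} (hx : x ∈ 𝒜 g) (n : ℕ)
    {h : G} (hh : (decompose 𝒜 ((⇑D)^[n] x) h : R) ≠ 0) : φ h ≤ φ g + n • φ d := by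
  induction n generalizing h with
  | zero =>
    obtain rfl : g = h := by_contra fun hgh => hh (decompose_of_mem_ne 𝒜 hx hgh)
    simp
  | succ n ih =>
    rw [Function.iterate_succ_apply'] at hh
    rw [succ_nsmul, ← add_assoc]
    exact le_add_of_coe_decompose_apply_ne_zero 𝒜 D hd (fun _ => ih) hh

include hφ

theorem coe_decompose_iterate_apply_add_nsmul {g : G} {x : R} (hx : x ∈ 𝒜 g) (n : ℕ) :
    (decompose 𝒜 ((⇑D)^[n] x) (g + n • d) : R) = (⇑(D.homogeneousComponent 𝒜 d))^[n] x := by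
  induction n with
  | zero =>
    rw [Function.iterate_zero_apply, Function.iterate_zero_apply, zero_nsmul, add_zero,
      decompose_of_mem_same 𝒜 hx]
  | succ n ih =>
    have hy : ∀ h, (decompose 𝒜 ((⇑D)^[n] x) h : R) ≠ 0 → φ h ≤ φ (g + n • d) := fun h hh => by
      simpa using le_of_coe_decompose_iterate_apply_ne_zero 𝒜 D hd hx n hh
    rw [Function.iterate_succ_apply', Function.iterate_succ_apply', succ_nsmul, ← add_assoc,
      coe_decompose_apply_add_eq_homogeneousComponent 𝒜 D hφ hd hy, ih]

theorem IsLocallyNilpotentD.homogeneousComponent_of_isMax (hD : D.IsLocallyNilpotentD) :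
    (D.homogeneousComponent 𝒜 d).IsLocallyNilpotentD :=
  isLocallyNilpotentD_of_forall_mem 𝒜 _ fun g x hx =>
    let ⟨n, _, hn⟩ := hD x
    ⟨n, by rw [← coe_decompose_iterate_apply_add_nsmul 𝒜 D hφ hd hx n, hn, decompose_zero]; rfl⟩

end TopDegree

theorem IsLocallyNilpotentD.homogeneousComponent_apply_eq_zero_of_isUnit [IsDomain R]
    [CharZero R] {L : Type*} [AddCommGroup L] [LinearOrder L] [IsOrderedAddMonoid L]
    {φ : G →+ L} (hφ : Function.Injective φ) {D : Derivation ℤ R R} (hD : D.IsLocallyNilpotentD)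
    {u : R} (hu : IsUnit u) (e : G) : D.homogeneousComponent 𝒜 e u = 0 := by
  obtain ⟨g, hg⟩ := isHomogeneousElem_of_isUnit 𝒜 hφ hu
  rw [homogeneousComponent_apply_of_mem 𝒜 D hg, hD.apply_eq_zero_of_isUnit hu, decompose_zero]
  rfl

end Derivation

end Graded

/-- Let `G` be a torsion-free abelian group and `R` a `G`-graded domain,
finitely generated as an algebra over a field of characteristic zero. If `R` is non-rigid
then there is a nonzero homogeneous locally nilpotent derivation of `R`. -/
theorem statement15 {G R : Type*} [AddCommGroup G] [DecidableEq G] [CommRing R] [IsDomain R]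
    (htf : ∀ (g : G) (n : ℕ), 0 < n → n • g = 0 → g = 0)
    (𝒜 : G → AddSubgroup R) [GradedRing 𝒜]
    (k : Type*) [Field k] [CharZero k] [Algebra k R] [Algebra.FiniteType k R]
    (hnr : ¬ IsRigidRing R) :
    ∃ D : Derivation ℤ R R, D ≠ 0 ∧ Derivation.IsLocallyNilpotentD D ∧
      ∃ d : G, ∀ i : G, ∀ x ∈ 𝒜 i, D x ∈ 𝒜 (i + d) := by
  have := IsAddTorsionFree.of_nsmul_eq_zero htf
  obtain ⟨L, _, _, _, φ, hφ⟩ := IsAddTorsionFree.exists_injective_addMonoidHom_linearOrder G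
  have : CharZero R := charZero_of_injective_algebraMap (algebraMap k R).injective
  obtain ⟨D, hD, hD0⟩ : ∃ D : Derivation ℤ R R, D.IsLocallyNilpotentD ∧ D ≠ 0 := by
    simpa [IsRigidRing] using hnr
  have hk : ∀ (e : G) (c : k), D.homogeneousComponent 𝒜 e (algebraMap k R c) = 0 := by
    intro e c
    rcases eq_or_ne c 0 with rfl | hc
    · simp
    · exact hD.homogeneousComponent_apply_eq_zero_of_isUnit 𝒜 hφ ((Ne.isUnit hc).map _) e
  obtain ⟨d, hd, hdmax⟩ := Set.exists_max_image _ φ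
    (D.finite_setOf_homogeneousComponent_ne_zero 𝒜 k hk)
    (D.nonempty_setOf_homogeneousComponent_ne_zero 𝒜 hD0)
  exact ⟨_, hd, hD.homogeneousComponent_of_isMax 𝒜 D hφ hdmax, d,
    fun i x hx => D.homogeneousComponent_mem 𝒜 hx d⟩
end

section
/- Let G be a torsion abelian group, S = ⊕_{i∈G} S_i a G-graded commutative ring, and R = ⊕_{i∈G} R_i a graded subring of S. Suppose that (i) S = R[v] is a polynomial ring in one variable over R generated by a homogeneous element v of S, and (ii) the set H = { i ∈ G : R_i ≠ 0 } is a subgroup of G. Then at least one of the following holds: (a) S_0 is a polynomial ring in one variable over R_0; (b) there exists e ∈ H∖{0} such that, if k > 0 denotes the order of e in H, then for every r ∈ R_e∖{0}, the localization (S_0)_{r^k} of S_0 at the powers of r^k is a polynomial ring in one variable over some subring. -/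
/-- The degree-zero part `S₀` as a subring, for a grading by additive subgroups. -/
def degZeroSubringA {G S : Type*} [AddCommGroup G] [CommRing S]
    (𝒮 : G → AddSubgroup S) [SetLike.GradedMonoid 𝒮] : Subring S where
  carrier := (𝒮 0 : Set S)
  zero_mem' := zero_mem _
  one_mem' := SetLike.one_mem_graded 𝒮
  add_mem' := fun ha hb => add_mem ha hb
  neg_mem' := fun ha => neg_mem ha
  mul_mem' := fun ha hb => by simpa using SetLike.mul_mem_graded ha hb


/-!
Every element of `S = R[v]` is `∑ cⱼ vʲ` with `cⱼ ∈ R`, and homogeneity of an element of `S₀`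
forces `cⱼ ∈ R_{-j g}`; so `cⱼ = 0` unless `j • g ∈ H`, i.e. unless `m ∣ j` for `m` the order
of `g` in `G ⧸ H`. Thus `S₀` consists of the sums `∑ cₜ v^{m t}` with `cₜ ∈ R_{t e}`,
`e = -(m • g)`. If `e = 0` this is `S₀ = R₀[v^m]`. Otherwise take `0 ≠ r ∈ R_e` and `ρ = r^k`:
then `r v^m ∈ S₀`, `ρᵗ cₜ v^{m t} = (cₜ r^{(k-1) t}) (r v^m)ᵗ`, and a relation
`∑ aₜ (r v^m)ᵗ = 0` over `R₀` forces `rᵗ aₜ = 0`. So the kernel and the cokernel of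
`R₀[X] → S₀, X ↦ r v^m` are killed by powers of `ρ`, and inverting `ρ` makes it an isomorphism.
-/

open Polynomial

theorem Polynomial.expand_contract_of_dvd {A : Type*} [CommSemiring A] {m : ℕ} (hm : m ≠ 0)
    {f : A[X]} (hf : ∀ n, f.coeff n ≠ 0 → m ∣ n) : expand A m (contract m f) = f := by
  ext n
  rw [coeff_expand hm.bot_lt, coeff_contract hm]
  split_ifs with h
  · rw [Nat.div_mul_cancel h]
  · exact (not_imp_comm.mp (hf n) h).symm

theorem Polynomial.eval₂_expand {A S : Type*} [CommSemiring A] [CommSemiring S] (f : A →+* S)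
    (x : S) (m : ℕ) (p : A[X]) : eval₂ f x (expand A m p) = eval₂ f (x ^ m) p := by
  rw [expand_eq_comp_X_pow, eval₂_comp, eval₂_X_pow]

theorem Subring.exists_pow_mul_sum_mem {C ι : Type*} [CommRing C] {M : Subring C} {ρ : C}
    (hρ : ρ ∈ M) (s : Finset ι) (f : ι → C) (h : ∀ i ∈ s, ∃ n : ℕ, ρ ^ n * f i ∈ M) :
    ∃ n : ℕ, ρ ^ n * ∑ i ∈ s, f i ∈ M := by
  classical
  induction s using Finset.induction_on with
  | empty => exact ⟨0, by simp⟩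
  | insert i s hi ih =>
    obtain ⟨a, ha⟩ := h i (Finset.mem_insert_self i s)
    obtain ⟨b, hb⟩ := ih fun j hj => h j (Finset.mem_insert_of_mem hj)
    refine ⟨a + b, ?_⟩
    rw [Finset.sum_insert hi]
    have hsplit : ρ ^ (a + b) * (f i + ∑ j ∈ s, f j) =
        ρ ^ b * (ρ ^ a * f i) + ρ ^ a * (ρ ^ b * ∑ j ∈ s, f j) := by ring
    rw [hsplit]
    exact add_mem (mul_mem (pow_mem hρ b) ha) (mul_mem (pow_mem hρ a) hb)

theorem isPolynomialRingOver_range_of_bijective {B L : Type*} [CommRing B] [CommRing L]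
    {ψ : B →+* L} {T : L} (h : Function.Bijective (eval₂RingHom ψ T)) :
    IsPolynomialRingOver ψ.range := by
  have hψ : Function.Injective ψ.rangeRestrict := fun a b hab =>
    C_injective (h.1 (by simpa using congrArg Subtype.val hab))
  let e : B ≃+* ψ.range := RingEquiv.ofBijective _ ⟨hψ, ψ.rangeRestrict_surjective⟩
  refine ⟨(RingEquiv.ofBijective _ h).symm.trans (mapEquiv e), ?_⟩
  rintro ⟨_, b, rfl⟩
  have hb : (RingEquiv.ofBijective _ h).symm (ψ b) = C b := by
    rw [RingEquiv.symm_apply_eq]; simp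
  simp only [RingEquiv.trans_apply, hb, mapEquiv_apply, map_C]
  rfl

section Localization

variable {A E B L : Type*} [CommRing A] [CommRing E] [CommRing B] [CommRing L]
  {ι : A →+* E} {τ : E} {ρ : A} [Algebra A B] [IsLocalization.Away ρ B]
  [Algebra E L] [IsLocalization.Away (ι ρ) L] {ψ : B →+* L}

theorem injective_eval₂_of_isLocalization
    (hψ : ψ.comp (algebraMap A B) = (algebraMap E L).comp ι)
    (hker : ∀ p : A[X], eval₂ ι τ p = 0 → ∀ t, ∃ n : ℕ, ρ ^ n * p.coeff t = 0) :
    Function.Injective (eval₂RingHom ψ (algebraMap E L τ)) := by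
  rw [injective_iff_map_eq_zero]
  intro q hq
  obtain ⟨b, hb, hpb⟩ := IsLocalization.integerNormalization_spec (Submonoid.powers ρ) q
  set p := IsLocalization.integerNormalization (Submonoid.powers ρ) q
  have hp0 : algebraMap E L (eval₂ ι τ p) = 0 := by
    rw [hom_eval₂, ← hψ, ← eval₂_map, hpb, ← IsScalarTower.algebraMap_smul B b q, eval₂_smul,
      ← coe_eval₂RingHom, hq, mul_zero]
  obtain ⟨⟨_, n, rfl⟩, hn⟩ := (IsLocalization.map_eq_zero_iff (Submonoid.powers (ι ρ)) L _).1 hp0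
  have hρp : eval₂ ι τ (C (ρ ^ n) * p) = 0 := by rw [eval₂_mul, eval₂_C, map_pow, hn]
  have hmap : (C (ρ ^ n) * p).map (algebraMap A B) = 0 := by
    ext t
    obtain ⟨k, hk⟩ := hker _ hρp t
    rw [coeff_map, coeff_zero, IsLocalization.map_eq_zero_iff (Submonoid.powers ρ)]
    exact ⟨⟨_, k, rfl⟩, hk⟩
  have hunit : IsUnit (algebraMap A B (ρ ^ n * b)) :=
    IsLocalization.map_units B
      ⟨ρ ^ n * b, mul_mem (Submonoid.pow_mem _ (Submonoid.mem_powers ρ) n) hb⟩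
  rw [Polynomial.map_mul, hpb, map_C, ← IsScalarTower.algebraMap_smul B b q,
    smul_eq_C_mul, ← mul_assoc, ← C_mul, ← map_mul] at hmap
  exact (hunit.map C).mul_right_eq_zero.1 hmap

theorem surjective_eval₂_of_isLocalization
    (hψ : ψ.comp (algebraMap A B) = (algebraMap E L).comp ι)
    (hsurj : ∀ c : E, ∃ (n : ℕ) (p : A[X]), ι ρ ^ n * c = eval₂ ι τ p) :
    Function.Surjective (eval₂RingHom ψ (algebraMap E L τ)) := by
  intro z
  obtain ⟨n, c, hc⟩ := IsLocalization.Away.surj (ι ρ) z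
  obtain ⟨N, p, hp⟩ := hsurj c
  set w := ψ (IsLocalization.Away.invSelf ρ)
  have hw : (algebraMap E L (ι ρ) * w) ^ (N + n) = 1 := by
    rw [← RingHom.comp_apply, ← hψ, RingHom.comp_apply, ← map_mul,
      IsLocalization.Away.mul_invSelf, map_one, one_pow]
  have hp' : algebraMap E L (ι ρ) ^ N * algebraMap E L c =
      eval₂ ψ (algebraMap E L τ) (p.map (algebraMap A B)) := by
    rw [eval₂_map, hψ, ← hom_eval₂, ← hp, map_mul, map_pow]
  refine ⟨C (IsLocalization.Away.invSelf ρ) ^ (N + n) * p.map (algebraMap A B), ?_⟩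
  simp only [coe_eval₂RingHom, eval₂_mul, eval₂_pow, eval₂_C, ← hp']
  linear_combination z * hw - w ^ (N + n) * algebraMap E L (ι ρ) ^ N * hc

end Localization

section Graded

variable {G S : Type*} [AddCommGroup G] [DecidableEq G] [CommRing S] (𝒮 : G → AddSubgroup S)
  [GradedRing 𝒮] {R : Subring S} {v : S} {g : G}

local notation "S₀" => degZeroSubringA 𝒮
local notation "R₀" => Subring.comap (Subring.subtype (degZeroSubringA 𝒮)) R

@[simp]
theorem mem_degZeroSubringA {x : S} : x ∈ degZeroSubringA 𝒮 ↔ x ∈ 𝒮 0 := Iff.rfl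

theorem coeff_mem_of_eval₂_mem
    (hRgraded : ∀ r ∈ R, ∀ i : G, ((DirectSum.decompose 𝒮 r i : 𝒮 i) : S) ∈ R)
    (hv : v ∈ 𝒮 g) (hinj : Function.Injective (eval₂RingHom R.subtype v))
    {p : R[X]} {i : G} (hp : eval₂ R.subtype v p ∈ 𝒮 i) (j : ℕ) :
    (p.coeff j : S) ∈ 𝒮 (i - j • g) := by
  let π : ℕ → R → R := fun j c => ⟨GradedRing.proj 𝒮 (i - j • g) c, hRgraded _ c.2 _⟩
  let p' : R[X] := ∑ j ∈ p.support, monomial j (π j (p.coeff j))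
  have hp' : p' = p := by
    apply hinj
    simp only [coe_eval₂RingHom]
    calc eval₂ R.subtype v p'
        = ∑ j ∈ p.support, GradedRing.proj 𝒮 (i - j • g) (p.coeff j) * v ^ j := by
          simp [p', π, eval₂_finsetSum]
      _ = ∑ j ∈ p.support, GradedRing.proj 𝒮 i (p.coeff j * v ^ j) := by
          refine Finset.sum_congr rfl fun j _ => ?_
          rw [GradedRing.proj_apply, GradedRing.proj_apply, ← sub_add_cancel i (j • g),
            DirectSum.coe_decompose_mul_add_of_right_mem 𝒮 (SetLike.pow_mem_graded j hv),
            add_sub_cancel_right]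
      _ = GradedRing.proj 𝒮 i (eval₂ R.subtype v p) := by
          rw [eval₂_eq_sum, Polynomial.sum, map_sum]
          rfl
      _ = eval₂ R.subtype v p := by
          rw [GradedRing.proj_apply, DirectSum.decompose_of_mem_same 𝒮 hp]
  rw [← hp', finsetSum_coeff]
  simp only [coeff_monomial, Finset.sum_ite_eq', apply_ite Subtype.val, ZeroMemClass.coe_zero]
  split_ifs
  · exact SetLike.coe_mem _
  · exact zero_mem _

theorem nsmul_mem_of_coeff_ne_zero
    (hRgraded : ∀ r ∈ R, ∀ i : G, ((DirectSum.decompose 𝒮 r i : 𝒮 i) : S) ∈ R)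
    (hv : v ∈ 𝒮 g) (hinj : Function.Injective (eval₂RingHom R.subtype v))
    {H : AddSubgroup G} (hH : {i : G | ∃ x ∈ R, x ∈ 𝒮 i ∧ x ≠ 0} ⊆ H)
    {p : R[X]} (hp : eval₂ R.subtype v p ∈ 𝒮 0) {j : ℕ} (hj : p.coeff j ≠ 0) : j • g ∈ H := by
  have h : 0 - j • g ∈ H := hH ⟨_, (p.coeff j).2,
    coeff_mem_of_eval₂_mem 𝒮 hRgraded hv hinj hp j, by simpa using hj⟩
  simpa using h

theorem exists_eval₂_pow_eq_of_mem_zero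
    (hRgraded : ∀ r ∈ R, ∀ i : G, ((DirectSum.decompose 𝒮 r i : 𝒮 i) : S) ∈ R)
    (hv : v ∈ 𝒮 g) (hpoly : Function.Bijective (eval₂RingHom R.subtype v))
    {H : AddSubgroup G} (hH : {i : G | ∃ x ∈ R, x ∈ 𝒮 i ∧ x ≠ 0} ⊆ H)
    {m : ℕ} (hm : m ≠ 0) (hdvd : ∀ j : ℕ, j • g ∈ H → m ∣ j) {s : S} (hs : s ∈ 𝒮 0) :
    ∃ p : R[X], (∀ t : ℕ, (p.coeff t : S) ∈ 𝒮 (t • -(m • g))) ∧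
      eval₂ R.subtype (v ^ m) p = s := by
  obtain ⟨q, rfl⟩ := hpoly.2 s
  rw [coe_eval₂RingHom] at hs ⊢
  refine ⟨contract m q, fun t => ?_, ?_⟩
  · have h := coeff_mem_of_eval₂_mem 𝒮 hRgraded hv hpoly.1 hs (t * m)
    rwa [zero_sub, mul_nsmul', ← smul_neg, ← coeff_contract hm] at h
  · rw [← eval₂_expand, expand_contract_of_dvd hm fun j hj =>
      hdvd j (nsmul_mem_of_coeff_ne_zero 𝒮 hRgraded hv hpoly.1 hH hs hj)]

theorem pow_mul_coeff_eq_zero_of_eval₂_eq_zero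
    (hinj : Function.Injective (eval₂RingHom R.subtype v)) {m : ℕ} (hm : m ≠ 0)
    {r : S} (hrR : r ∈ R) {k : ℕ} (hk : k ≠ 0) {ρ : R₀} (hρ : ((ρ : S₀) : S) = r ^ k)
    {τ : S₀} (hτ : (τ : S) = r * v ^ m) {p : Polynomial R₀}
    (hp : eval₂ (Subring.subtype R₀) τ p = 0) (t : ℕ) : ρ ^ t * p.coeff t = 0 := by
  let u : R₀ →+* R := (Subring.subtype S₀).restrict R₀ R fun _ hx => hx
  have hexpand : eval₂ R.subtype v (expand R m ((p.map u).comp (C ⟨r, hrR⟩ * X))) = 0 := by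
    have h := congrArg (Subring.subtype S₀) hp
    rw [hom_eval₂, map_zero] at h
    rw [eval₂_expand, eval₂_comp, eval₂_mul, eval₂_C, eval₂_X, eval₂_map, ← h]
    congr 1
    exact hτ.symm
  have hcomp : (p.map u).comp (C ⟨r, hrR⟩ * X) = 0 :=
    (expand_eq_zero (Nat.pos_of_ne_zero hm)).1 (hinj (by simpa using hexpand))
  have hcoeff : (p.coeff t : S) * r ^ t = 0 := by
    have h := congrArg (fun q => ((q.coeff t : R) : S)) hcomp
    simp only [comp_C_mul_X_coeff, coeff_map, coeff_zero, MulMemClass.coe_mul,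
      SubmonoidClass.coe_pow, ZeroMemClass.coe_zero] at h
    exact h
  obtain ⟨k, rfl⟩ := Nat.exists_eq_add_one_of_ne_zero hk
  apply Subtype.ext; apply Subtype.ext
  simp only [MulMemClass.coe_mul, SubmonoidClass.coe_pow, hρ, ZeroMemClass.coe_zero]
  calc (r ^ (k + 1)) ^ t * (p.coeff t : S) = r ^ (k * t) * ((p.coeff t : S) * r ^ t) := by ring
    _ = 0 := by rw [hcoeff, mul_zero]

theorem exists_pow_mul_eq_eval₂
    (hRgraded : ∀ r ∈ R, ∀ i : G, ((DirectSum.decompose 𝒮 r i : 𝒮 i) : S) ∈ R)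
    (hv : v ∈ 𝒮 g) (hpoly : Function.Bijective (eval₂RingHom R.subtype v))
    {H : AddSubgroup G} (hH : {i : G | ∃ x ∈ R, x ∈ 𝒮 i ∧ x ≠ 0} ⊆ H)
    {m : ℕ} (hm : m ≠ 0) (hdvd : ∀ j : ℕ, j • g ∈ H → m ∣ j)
    {r : S} (hrR : r ∈ R) (hre : r ∈ 𝒮 (-(m • g))) {k : ℕ} (hk : k ≠ 0)
    (hke : k • -(m • g) = 0) {ρ : R₀} (hρ : ((ρ : S₀) : S) = r ^ k)
    {τ : S₀} (hτ : (τ : S) = r * v ^ m) (s : S₀) :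
    ∃ (n : ℕ) (p : Polynomial R₀), (ρ : S₀) ^ n * s = eval₂ (Subring.subtype R₀) τ p := by
  obtain ⟨p, hpc, hps⟩ := exists_eval₂_pow_eq_of_mem_zero 𝒮 hRgraded hv hpoly hH hm hdvd s.2
  obtain ⟨k, rfl⟩ := Nat.exists_eq_add_one_of_ne_zero hk
  have hterm : ∀ t, (p.coeff t : S) * (v ^ m) ^ t ∈ S₀ := fun t => by
    have h := SetLike.mul_mem_graded (hpc t)
      (SetLike.pow_mem_graded t (SetLike.pow_mem_graded m hv))
    rwa [← smul_add, neg_add_cancel, smul_zero] at h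
  have hcoef : ∀ t, (p.coeff t : S) * r ^ (t * k) ∈ S₀ := fun t => by
    have h := SetLike.mul_mem_graded (hpc t) (SetLike.pow_mem_graded (t * k) hre)
    rwa [mul_nsmul', ← smul_add, ← succ_nsmul', hke, smul_zero] at h
  have hs : s = ∑ t ∈ p.support, (⟨_, hterm t⟩ : S₀) := by
    apply Subtype.ext
    rw [← hps, eval₂_eq_sum, Polynomial.sum]
    simp
  suffices h : ∃ n : ℕ, (ρ : S₀) ^ n * s ∈ (eval₂RingHom (Subring.subtype R₀) τ).range by
    obtain ⟨n, q, hq⟩ := h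
    exact ⟨n, q, hq.symm⟩
  rw [hs]
  refine Subring.exists_pow_mul_sum_mem (RingHom.mem_range.2 ⟨C ρ, eval₂_C _ _⟩) _ _ fun t _ =>
    ⟨t, C ⟨⟨_, hcoef t⟩, mul_mem (p.coeff t).2 (pow_mem hrR _)⟩ * X ^ t, ?_⟩
  apply Subtype.ext
  simp only [coe_eval₂RingHom, eval₂_mul, eval₂_C, Subring.subtype_apply, eval₂_X_pow,
    Subring.coe_mul, SubmonoidClass.coe_pow, hτ, hρ]
  ring

theorem isPolynomialRingOver_degZero_of_nsmul_eq_zero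
    (hRgraded : ∀ r ∈ R, ∀ i : G, ((DirectSum.decompose 𝒮 r i : 𝒮 i) : S) ∈ R)
    (hv : v ∈ 𝒮 g) (hpoly : Function.Bijective (eval₂RingHom R.subtype v))
    {H : AddSubgroup G} (hH : {i : G | ∃ x ∈ R, x ∈ 𝒮 i ∧ x ≠ 0} ⊆ H)
    {m : ℕ} (hm : m ≠ 0) (hdvd : ∀ j : ℕ, j • g ∈ H → m ∣ j) (hmg : m • g = 0) :
    IsPolynomialRingOver R₀ := by
  have hτ : 1 * v ^ m ∈ S₀ := by
    rw [one_mul, mem_degZeroSubringA, ← hmg]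
    exact SetLike.pow_mem_graded m hv
  have hone : (1 : S) ∈ 𝒮 (-(m • g)) := by
    rw [hmg, neg_zero]
    exact SetLike.one_mem_graded 𝒮
  have hbij : Function.Bijective (eval₂RingHom (Subring.subtype R₀) ⟨_, hτ⟩) := by
    refine ⟨(injective_iff_map_eq_zero _).2 fun p hp => ext fun t => ?_, fun s => ?_⟩
    · simpa using pow_mul_coeff_eq_zero_of_eval₂_eq_zero 𝒮 hpoly.1 hm R.one_mem one_ne_zero
        (ρ := 1) (by simp) (τ := ⟨_, hτ⟩) rfl hp t
    · obtain ⟨n, p, hp⟩ := exists_pow_mul_eq_eval₂ 𝒮 hRgraded hv hpoly hH hm hdvd R.one_mem hone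
        one_ne_zero (by simp [hmg]) (ρ := 1) (by simp) (τ := ⟨_, hτ⟩) rfl s
      exact ⟨p, by simpa using hp.symm⟩
  simpa using isPolynomialRingOver_range_of_bijective hbij

theorem isPolynomialRingInOneVariable_away
    (hRgraded : ∀ r ∈ R, ∀ i : G, ((DirectSum.decompose 𝒮 r i : 𝒮 i) : S) ∈ R)
    (hv : v ∈ 𝒮 g) (hpoly : Function.Bijective (eval₂RingHom R.subtype v))
    {H : AddSubgroup G} (hH : {i : G | ∃ x ∈ R, x ∈ 𝒮 i ∧ x ≠ 0} ⊆ H)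
    {m : ℕ} (hm : m ≠ 0) (hdvd : ∀ j : ℕ, j • g ∈ H → m ∣ j)
    {r : S} (hrR : r ∈ R) (hre : r ∈ 𝒮 (-(m • g))) {k : ℕ} (hk : k ≠ 0)
    (hke : k • -(m • g) = 0) (hρ : r ^ k ∈ S₀) :
    IsPolynomialRingInOneVariable (Localization.Away (⟨r ^ k, hρ⟩ : S₀)) := by
  have hτ : r * v ^ m ∈ S₀ := by
    simpa using SetLike.mul_mem_graded hre (SetLike.pow_mem_graded m hv)
  let ρ : R₀ := ⟨⟨_, hρ⟩, pow_mem hrR _⟩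
  let L := Localization.Away (⟨_, hρ⟩ : S₀)
  -- instance search does not see through `Subring.subtype _ ρ = ⟨r ^ k, hρ⟩`
  have : IsLocalization.Away (Subring.subtype _ ρ) L :=
    inferInstanceAs (IsLocalization.Away (⟨_, hρ⟩ : S₀) L)
  have hψ := IsLocalization.Away.lift_comp (S := Localization.Away ρ)
    (g := (algebraMap S₀ L).comp (Subring.subtype _)) ρ
    (IsLocalization.Away.algebraMap_isUnit (S := L) (Subring.subtype _ ρ))
  exact ⟨_, isPolynomialRingOver_range_of_bijective
    ⟨injective_eval₂_of_isLocalization hψ fun p hp t =>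
      ⟨t, pow_mul_coeff_eq_zero_of_eval₂_eq_zero 𝒮 hpoly.1 hm hrR hk (ρ := ρ) rfl
        (τ := ⟨_, hτ⟩) rfl hp t⟩,
    surjective_eval₂_of_isLocalization (ρ := ρ) hψ
      (exists_pow_mul_eq_eval₂ 𝒮 hRgraded hv hpoly hH hm hdvd hrR hre hk hke (ρ := ρ) rfl rfl)⟩⟩

end Graded

/-- Let `G` be a torsion abelian group, `S` a `G`-graded ring, `R` a graded
subring with `S = R[v]` for a homogeneous `v`, and suppose `H = {i : R_i ≠ 0}` is a subgroup
of `G`. Then either (a) `S₀` is a polynomial ring in one variable over `R₀`, or (b) there is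
`e ∈ H∖{0}` such that, `k` being the order of `e`, for every `0 ≠ r ∈ R_e` the localization
`(S₀)_{r^k}` is a polynomial ring in one variable. -/
theorem statement17 {G S : Type*} [AddCommGroup G] [DecidableEq G] [CommRing S]
    (𝒮 : G → AddSubgroup S) [GradedRing 𝒮]
    (htor : ∀ g : G, ∃ n : ℕ, 0 < n ∧ n • g = 0)
    (R : Subring S)
    (hRgraded : ∀ r ∈ R, ∀ i : G, ((DirectSum.decompose 𝒮 r i : 𝒮 i) : S) ∈ R)
    (v : S) (g : G) (hv : v ∈ 𝒮 g)
    (hpoly : Function.Bijective (Polynomial.eval₂RingHom R.subtype v))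
    (H : AddSubgroup G)
    (hH : (H : Set G) = {i : G | ∃ x ∈ R, x ∈ 𝒮 i ∧ x ≠ 0}) :
    IsPolynomialRingOver (R.comap (degZeroSubringA 𝒮).subtype) ∨
    ∃ e : G, e ∈ H ∧ e ≠ 0 ∧ ∀ r : S, r ∈ R → r ∈ 𝒮 e → r ≠ 0 →
      ∀ h : r ^ addOrderOf e ∈ degZeroSubringA 𝒮,
        IsPolynomialRingInOneVariable
          (Localization.Away (⟨r ^ addOrderOf e, h⟩ : degZeroSubringA 𝒮)) := by
  set m := addOrderOf (g : G ⧸ H)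
  have hm : m ≠ 0 := by
    obtain ⟨n, hn, hng⟩ := htor g
    refine (isOfFinAddOrder_iff_nsmul_eq_zero.2 ⟨n, hn, ?_⟩).addOrderOf_pos.ne'
    rw [← QuotientAddGroup.mk_nsmul, hng, QuotientAddGroup.mk_zero]
  have hdvd : ∀ j : ℕ, j • g ∈ H → m ∣ j := fun j hj => addOrderOf_dvd_of_nsmul_eq_zero <| by
    rwa [← QuotientAddGroup.mk_nsmul, QuotientAddGroup.eq_zero_iff]
  have hmH : m • g ∈ H := by
    rw [← QuotientAddGroup.eq_zero_iff, QuotientAddGroup.mk_nsmul]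
    exact addOrderOf_nsmul_eq_zero _
  by_cases hmg : m • g = 0
  · exact .inl <| isPolynomialRingOver_degZero_of_nsmul_eq_zero 𝒮 hRgraded hv hpoly
      hH.symm.subset hm hdvd hmg
  · refine .inr ⟨-(m • g), H.neg_mem hmH, neg_ne_zero.2 hmg, fun r hrR hre _ hρ => ?_⟩
    exact isPolynomialRingInOneVariable_away 𝒮 hRgraded hv hpoly hH.symm.subset hm hdvd hrR hre
      (isOfFinAddOrder_iff_nsmul_eq_zero.2 (htor _)).addOrderOf_pos.ne'
      (addOrderOf_nsmul_eq_zero _) hρ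
end
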